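/- arXiv:math/0610233 — 4 statements merged into one kernel-verified Lean document; each statement's English description precedes it below -/
import Mathlib

section
/- Fix positive integers d and M. Let P_τ, τ in some finite index set T, be lattice polytopes each contained in [0,M]^d. Then the number of vertices of the Minkowski sum Σ_{τ∈T} P_τ is at most 2 * sum_{j=0}^{d-1} binomial((2M+1)^d - 1, j); in particular, this bound is independent of the number of polytopes |T| and is O(M^{d(d-1)}) for fixed d. -/
noncomputable section

def dot {d : ℕ} (w x : Fin d → ℝ) : ℝ := ∑ i, w i * x i

def face {d : ℕ} (w : Fin d → ℝ) (P : Set (Fin d → ℝ)) : Set (Fin d → ℝ) :=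
  {x | x ∈ P ∧ ∀ y ∈ P, dot w y ≤ dot w x}

def IsVertex {d : ℕ} (P : Set (Fin d → ℝ)) (v : Fin d → ℝ) : Prop :=
  ∃ w, face w P = {v}

/-- The Minkowski sum of a finite family of subsets of `ℝ^d` indexed by a finite type. -/
def minkSum {d : ℕ} {T : Type*} [Fintype T] (P : T → Set (Fin d → ℝ)) : Set (Fin d → ℝ) :=
  {x | ∃ g : T → (Fin d → ℝ), (∀ τ, g τ ∈ P τ) ∧ x = ∑ τ, g τ}

open Finset

lemma dot_add_left {d : ℕ} (w w' x : Fin d → ℝ) : dot (w + w') x = dot w x + dot w' x := by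
  simp [dot, add_mul, Finset.sum_add_distrib]

lemma dot_smul_left {d : ℕ} (t : ℝ) (w x : Fin d → ℝ) : dot (t • w) x = t * dot w x := by
  simp [dot, Finset.mul_sum, mul_assoc]

lemma dot_zero_left {d : ℕ} (x : Fin d → ℝ) : dot 0 x = 0 := by simp [dot]

def patSet {d : ℕ} {n : ℕ} (W : Submodule ℝ (Fin d → ℝ)) (v : Fin n → (Fin d → ℝ)) :
    Set (Fin n → Bool) :=
  {s | ∃ w ∈ W, (∀ i, dot w (v i) ≠ 0) ∧ ∀ i, s i = decide (0 < dot w (v i))}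

def dotL {d : ℕ} (L : Fin d → ℝ) : (Fin d → ℝ) →ₗ[ℝ] ℝ where
  toFun w := dot w L
  map_add' := by intro a b; exact dot_add_left a b L
  map_smul' := by intro t a; exact dot_smul_left t a L

lemma sum_choose_succ (m k : ℕ) :
    ∑ j ∈ range (k+1), Nat.choose (m+1) j
      = ∑ j ∈ range (k+1), Nat.choose m j + ∑ j ∈ range k, Nat.choose m j := by
  rw [Finset.sum_range_succ' (fun j => Nat.choose (m+1) j) k,
      Finset.sum_range_succ' (fun j => Nat.choose m j) k]
  simp only [Nat.choose_succ_succ, Nat.choose_zero_right]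
  rw [Finset.sum_add_distrib]
  ring

lemma patSet_card {d : ℕ} : ∀ (n : ℕ), 1 ≤ n → ∀ (k : ℕ) (W : Submodule ℝ (Fin d → ℝ)),
    Module.finrank ℝ W ≤ k → ∀ v : Fin n → (Fin d → ℝ),
    (patSet W v).ncard ≤ 2 * ∑ j ∈ range k, Nat.choose (n-1) j := by
  intro n
  induction n with
  | zero => intro h; omega
  | succ n ih =>
    intro _ k W hW v
    -- case k = 0 : W = ⊥, patSet empty
    rcases Nat.eq_zero_or_pos k with rfl | hk
    · have hW0 : W = ⊥ := by
        have := Nat.le_zero.mp hW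
        exact Submodule.finrank_eq_zero.mp this
      have : patSet W v = ∅ := by
        ext s
        simp only [patSet, Set.mem_setOf_eq, Set.mem_empty_iff_false, iff_false]
        rintro ⟨w, hwW, hne, -⟩
        rw [hW0, Submodule.mem_bot] at hwW
        exact hne 0 (by rw [hwW]; exact dot_zero_left _)
      simp [this]
    obtain ⟨k', rfl⟩ : ∃ k', k = k' + 1 := ⟨k - 1, by omega⟩
    rcases Nat.eq_zero_or_pos n with rfl | hn
    · -- base case: one vector
      have h1 : (patSet W v).ncard ≤ (Set.univ : Set (Fin 1 → Bool)).ncard :=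
        Set.ncard_le_ncard (Set.subset_univ _) (Set.toFinite _)
      have h2 : (Set.univ : Set (Fin 1 → Bool)).ncard = 2 := by
        rw [Set.ncard_univ, Nat.card_eq_fintype_card]
        simp
      have h3 : ∑ j ∈ range (k'+1), Nat.choose 0 j = 1 := by
        rw [Finset.sum_range_succ']
        simp
      rw [h3]
      omega
    -- inductive step
    set L := v (Fin.last n) with hL
    set v' : Fin n → (Fin d → ℝ) := v ∘ Fin.castSucc with hv'
    set r : (Fin (n+1) → Bool) → (Fin n → Bool) := fun s => s ∘ Fin.castSucc with hr
    set St : Set (Fin (n+1) → Bool) := {s | s ∈ patSet W v ∧ s (Fin.last n) = true} with hSt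
    set Sf : Set (Fin (n+1) → Bool) := {s | s ∈ patSet W v ∧ s (Fin.last n) = false} with hSf
    have hsplit : patSet W v = St ∪ Sf := by
      ext s
      by_cases h : s (Fin.last n) = true
      · simp [hSt, hSf, h]
      · simp only [Bool.not_eq_true] at h
        simp [hSt, hSf, h]
    have hdisj : Disjoint St Sf := by
      rw [Set.disjoint_left]
      rintro s ⟨-, h1⟩ ⟨-, h2⟩
      rw [h1] at h2; exact Bool.noConfusion h2
    have hinjt : Set.InjOn r St := by
      rintro s1 ⟨-, h1⟩ s2 ⟨-, h2⟩ h
      funext i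
      refine Fin.lastCases ?_ ?_ i
      · rw [h1, h2]
      · intro j; exact congrFun h j
    have hinjf : Set.InjOn r Sf := by
      rintro s1 ⟨-, h1⟩ s2 ⟨-, h2⟩ h
      funext i
      refine Fin.lastCases ?_ ?_ i
      · rw [h1, h2]
      · intro j; exact congrFun h j
    have himt : r '' St ⊆ patSet W v' := by
      rintro s0 ⟨s, ⟨⟨w, hwW, hne, hs⟩, -⟩, rfl⟩
      exact ⟨w, hwW, fun i => hne _, fun i => hs _⟩
    have himf : r '' Sf ⊆ patSet W v' := by
      rintro s0 ⟨s, ⟨⟨w, hwW, hne, hs⟩, -⟩, rfl⟩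
      exact ⟨w, hwW, fun i => hne _, fun i => hs _⟩
    have key : (patSet W v).ncard ≤ (patSet W v').ncard + (r '' St ∩ r '' Sf).ncard := by
      rw [hsplit, Set.ncard_union_eq hdisj (Set.toFinite _) (Set.toFinite _),
        ← Set.ncard_image_of_injOn hinjt, ← Set.ncard_image_of_injOn hinjf,
        ← Set.ncard_union_add_ncard_inter (r '' St) (r '' Sf)]
      have : (r '' St ∪ r '' Sf).ncard ≤ (patSet W v').ncard :=
        Set.ncard_le_ncard (Set.union_subset himt himf) (Set.toFinite _)
      omega
    have hA : (patSet W v').ncard ≤ 2 * ∑ j ∈ range (k'+1), Nat.choose (n-1) j :=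
      ih hn (k'+1) W hW v'
    rcases Set.eq_empty_or_nonempty (r '' St ∩ r '' Sf) with hempty | ⟨s0, hs0t, hs0f⟩
    · rw [hempty] at key
      simp only [Set.ncard_empty, add_zero] at key
      refine key.trans (hA.trans ?_)
      have : ∀ j, Nat.choose (n-1) j ≤ Nat.choose (n+1-1) j := fun j =>
        Nat.choose_le_choose j (by omega)
      exact Nat.mul_le_mul_left 2 (Finset.sum_le_sum fun j _ => this j)
    · -- both signs realizable on L
      obtain ⟨sp, ⟨⟨wp, hwpW, hpne, hps⟩, hplast⟩, hrp⟩ := hs0t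
      obtain ⟨sm, ⟨⟨wm, hwmW, hmne, hms⟩, hmlast⟩, hrm⟩ := hs0f
      have hwpL : 0 < dot wp L := by
        have := hps (Fin.last n); rw [hplast] at this
        exact of_decide_eq_true this.symm
      have hwmL : dot wm L < 0 := by
        have := hms (Fin.last n); rw [hmlast] at this
        have h2 : ¬ (0 < dot wm L) := of_decide_eq_false this.symm
        exact lt_of_le_of_ne (not_lt.mp h2) (hmne (Fin.last n))
      set W' : Submodule ℝ (Fin d → ℝ) := W ⊓ LinearMap.ker (dotL L) with hW'
      have hWlt : W' < W := by
        refine lt_of_le_of_ne inf_le_left (fun h => ?_)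
        have : wp ∈ W' := h ▸ hwpW
        have : dot wp L = 0 := this.2
        exact absurd this (ne_of_gt hwpL)
      have hW'rank : Module.finrank ℝ W' ≤ k' := by
        have := Submodule.finrank_lt_finrank_of_lt hWlt
        omega
      have hB : (r '' St ∩ r '' Sf) ⊆ patSet W' v' := by
        rintro s1 ⟨⟨t1, ⟨⟨w1, hw1W, h1ne, h1s⟩, h1last⟩, rfl⟩,
                   ⟨t2, ⟨⟨w2, hw2W, h2ne, h2s⟩, h2last⟩, ht2⟩⟩
        have hw1L : 0 < dot w1 L := by
          have := h1s (Fin.last n); rw [h1last] at this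
          exact of_decide_eq_true this.symm
        have hw2L : dot w2 L < 0 := by
          have := h2s (Fin.last n); rw [h2last] at this
          have h2' : ¬ (0 < dot w2 L) := of_decide_eq_false this.symm
          exact lt_of_le_of_ne (not_lt.mp h2') (h2ne (Fin.last n))
        set a := dot w1 L
        set b := dot w2 L
        set w0 := (-b) • w1 + a • w2 with hw0
        have hw0W : w0 ∈ W := W.add_mem (W.smul_mem _ hw1W) (W.smul_mem _ hw2W)
        have hw0dot : ∀ x, dot w0 x = (-b) * dot w1 x + a * dot w2 x := by
          intro x; rw [hw0, dot_add_left, dot_smul_left, dot_smul_left]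
        have hw0L : dot w0 L = 0 := by rw [hw0dot]; ring
        have hsign : ∀ i : Fin n,
            (((r t1) i = true) → 0 < dot w0 (v' i)) ∧ (((r t1) i = false) → dot w0 (v' i) < 0) := by
          intro i
          have e1 := h1s (Fin.castSucc i)
          have e2 := h2s (Fin.castSucc i)
          have e2' : (r t1) i = (r t2) i := by rw [ht2]
          have hb' : 0 < -b := by simpa using hw2L
          constructor
          · intro htrue
            have p1 : 0 < dot w1 (v (Fin.castSucc i)) :=
              of_decide_eq_true (by rw [← e1]; exact htrue)
            have p2 : 0 < dot w2 (v (Fin.castSucc i)) :=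
              of_decide_eq_true (by rw [← e2]; show r t2 i = true; rw [← e2']; exact htrue)
            have : 0 < -b * dot w1 (v (Fin.castSucc i)) + a * dot w2 (v (Fin.castSucc i)) := by
              nlinarith
            rw [hw0dot]
            exact this
          · intro hfalse
            have p1 : dot w1 (v (Fin.castSucc i)) < 0 := by
              have h' : decide (0 < dot w1 (v (Fin.castSucc i))) = false := by
                rw [← e1]; exact hfalse
              exact lt_of_le_of_ne (not_lt.mp (of_decide_eq_false h')) (h1ne (Fin.castSucc i))
            have p2 : dot w2 (v (Fin.castSucc i)) < 0 := by
              have h' : decide (0 < dot w2 (v (Fin.castSucc i))) = false := by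
                rw [← e2]; show r t2 i = false; rw [← e2']; exact hfalse
              exact lt_of_le_of_ne (not_lt.mp (of_decide_eq_false h')) (h2ne (Fin.castSucc i))
            have : -b * dot w1 (v (Fin.castSucc i)) + a * dot w2 (v (Fin.castSucc i)) < 0 := by
              nlinarith
            rw [hw0dot]
            exact this
        refine ⟨w0, ⟨hw0W, by simpa [LinearMap.mem_ker, dotL] using hw0L⟩, ?_, ?_⟩
        · intro i
          cases h : (r t1) i with
          | false => exact ne_of_lt ((hsign i).2 h)
          | true => exact ne_of_gt ((hsign i).1 h)
        · intro i
          cases h : (r t1) i with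
          | false =>
            symm; rw [decide_eq_false_iff_not]
            exact not_lt.mpr (le_of_lt ((hsign i).2 h))
          | true =>
            symm; rw [decide_eq_true_eq]
            exact (hsign i).1 h
      have hBcard : (r '' St ∩ r '' Sf).ncard ≤ 2 * ∑ j ∈ range k', Nat.choose (n-1) j :=
        le_trans (Set.ncard_le_ncard hB (Set.toFinite _)) (by
          rcases Nat.eq_zero_or_pos k' with rfl | hk'
          · -- k' = 0 : patSet W' v' is empty since W' = ⊥
            have hW0 : W' = ⊥ := Submodule.finrank_eq_zero.mp (Nat.le_zero.mp hW'rank)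
            have : patSet W' v' = ∅ := by
              ext s
              simp only [patSet, Set.mem_setOf_eq, Set.mem_empty_iff_false, iff_false]
              rintro ⟨w, hwW, hne, -⟩
              rw [hW0, Submodule.mem_bot] at hwW
              exact hne ⟨0, hn⟩ (by rw [hwW]; exact dot_zero_left _)
            simp [this]
          · exact ih hn k' W' hW'rank v')
      refine key.trans ?_
      calc (patSet W v').ncard + (r '' St ∩ r '' Sf).ncard
          ≤ 2 * ∑ j ∈ range (k'+1), Nat.choose (n-1) j + 2 * ∑ j ∈ range k', Nat.choose (n-1) j :=
            Nat.add_le_add hA hBcard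
        _ = 2 * ∑ j ∈ range (k'+1), Nat.choose (n+1-1) j := by
            have hn1 : n - 1 + 1 = n := by omega
            have := sum_choose_succ (n-1) k'
            rw [hn1] at this
            simp only [Nat.add_sub_cancel]
            rw [this]; ring
lemma dot_add_right {d : ℕ} (w x y : Fin d → ℝ) : dot w (x + y) = dot w x + dot w y := by
  simp [dot, mul_add, Finset.sum_add_distrib]

lemma dot_smul_right {d : ℕ} (t : ℝ) (w x : Fin d → ℝ) : dot w (t • x) = t * dot w x := by
  simp [dot, Finset.mul_sum]; congr 1; funext i; ring

lemma dot_sub_right {d : ℕ} (w x y : Fin d → ℝ) : dot w (x - y) = dot w x - dot w y := by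
  simp [dot, mul_sub, Finset.sum_sub_distrib]

lemma dot_sum_right {d : ℕ} {T : Type*} [Fintype T] (w : Fin d → ℝ) (g : T → (Fin d → ℝ)) :
    dot w (∑ τ, g τ) = ∑ τ, dot w (g τ) := by
  simp only [dot, Finset.sum_apply, Finset.mul_sum]
  exact Finset.sum_comm

lemma dot_line {d : ℕ} (w u z : Fin d → ℝ) (t : ℝ) :
    dot (w + t • u) z = dot w z + t * dot u z := by
  simp [dot, add_mul, Finset.sum_add_distrib, Finset.mul_sum, mul_assoc]

lemma digits_zero (M : ℤ) (hM : 0 ≤ M) :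
    ∀ N (b : ℕ → ℤ), (∀ n, |b n| ≤ M) → (∑ n ∈ range N, b n * (2*M+1)^n) = 0 →
    ∀ n < N, b n = 0 := by
  intro N
  induction N with
  | zero => intro b _ _ n hn; omega
  | succ N ihN =>
    intro b hb hsum n hn
    rw [Finset.sum_range_succ'] at hsum
    have hfact : ∑ i ∈ range N, b (i+1) * (2*M+1)^(i+1)
        = (2*M+1) * ∑ i ∈ range N, b (i+1) * (2*M+1)^i := by
      rw [Finset.mul_sum]; congr 1; funext i; ring
    rw [hfact] at hsum
    set R := ∑ i ∈ range N, b (i+1) * (2*M+1)^i with hR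
    have hb0 : b 0 = -((2*M+1) * R) := by linarith
    rcases eq_or_ne R 0 with hR0 | hR0
    · rw [hR0] at hb0
      simp at hb0
      have hrest : ∀ m < N, b (m+1) = 0 := ihN (fun m => b (m+1)) (fun m => hb (m+1)) (by rw [← hR, hR0])
      rcases n with _ | m
      · exact hb0
      · exact hrest m (by omega)
    · exfalso
      have h1 : (2*M+1) ≤ |(2*M+1) * R| := by
        rw [abs_mul]
        have : (1:ℤ) ≤ |R| := Int.one_le_abs hR0
        have h2 : (0:ℤ) < 2*M+1 := by omega
        calc (2*M+1) = (2*M+1) * 1 := by ring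
          _ ≤ |2*M+1| * |R| := by
              rw [abs_of_pos h2]
              exact mul_le_mul_of_nonneg_left this (le_of_lt h2)
      have h3 : |b 0| ≤ M := hb 0
      rw [hb0, abs_neg] at h3
      omega

lemma udot {d M : ℕ} (a : Fin d → ℤ) (ha : ∀ i, |a i| ≤ (M:ℤ)) (hne : a ≠ 0) :
    dot (fun i : Fin d => ((2*(M:ℤ)+1 : ℤ) : ℝ)^(i:ℕ)) (fun i => (a i : ℝ)) ≠ 0 := by
  set b : ℕ → ℤ := fun n => if h : n < d then a ⟨n, h⟩ else 0 with hbdef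
  have h1 : (∑ i : Fin d, a i * (2*(M:ℤ)+1)^(i:ℕ)) = ∑ n ∈ range d, b n * (2*(M:ℤ)+1)^n := by
    rw [← Fin.sum_univ_eq_sum_range (fun n => b n * (2*(M:ℤ)+1)^n) d]
    congr 1
    funext i
    rw [hbdef]
    simp [i.isLt]
  have hsum : dot (fun i : Fin d => ((2*(M:ℤ)+1 : ℤ) : ℝ)^(i:ℕ)) (fun i => (a i : ℝ))
      = ((∑ n ∈ range d, b n * (2*(M:ℤ)+1)^n : ℤ) : ℝ) := by
    rw [← h1, dot]
    push_cast
    congr 1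
    funext i
    ring
  rw [hsum]
  intro hc
  have hzero : (∑ n ∈ range d, b n * (2*(M:ℤ)+1)^n : ℤ) = 0 := by exact_mod_cast hc
  have hbM : ∀ n, |b n| ≤ (M:ℤ) := by
    intro n; rw [hbdef]; dsimp only
    split
    · exact ha _
    · simp [Nat.cast_nonneg]
  have hall := digits_zero (M:ℤ) (by positivity) d b hbM hzero
  apply hne
  funext i
  have := hall i i.isLt
  rw [hbdef] at this
  simpa [i.isLt] using this
lemma dot_isLinear {d : ℕ} (w : Fin d → ℝ) : IsLinearMap ℝ (fun y => dot w y) := by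
  constructor
  · intro x y; exact dot_add_right w x y
  · intro c x; rw [smul_eq_mul]; exact dot_smul_right c w x

lemma vertex_data {d : ℕ} {T : Type*} [Fintype T] (P : T → Set (Fin d → ℝ))
    (S : T → Finset (Fin d → ℝ))
    (hS2 : ∀ τ, P τ = convexHull ℝ ((S τ : Set (Fin d → ℝ))))
    (x : Fin d → ℝ) (hx : IsVertex (minkSum P) x) :
    ∃ (w : Fin d → ℝ) (g : T → (Fin d → ℝ)),
      (∀ τ, g τ ∈ S τ) ∧ x = ∑ τ, g τ ∧
      ∀ τ, ∀ y ∈ S τ, y ≠ g τ → dot w y < dot w (g τ) := by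
  classical
  obtain ⟨w, hw⟩ := hx
  have hxface : x ∈ face w (minkSum P) := by rw [hw]; exact rfl
  obtain ⟨hxQ, hmax⟩ := hxface
  obtain ⟨g0, hg0P, hg0sum⟩ := hxQ
  have hSne : ∀ τ, (S τ).Nonempty := by
    intro τ
    rcases (S τ).eq_empty_or_nonempty with h | h
    · exfalso
      have := hg0P τ
      rw [hS2 τ, h] at this
      simp at this
    · exact h
  choose g hgmem hgmax0 using fun τ => (S τ).exists_max_image (fun y => dot w y) (hSne τ)
  have hmaxP : ∀ τ, ∀ y ∈ P τ, dot w y ≤ dot w (g τ) := by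
    intro τ y hy
    rw [hS2 τ] at hy
    have : convexHull ℝ ((S τ : Set (Fin d → ℝ))) ⊆ {z | dot w z ≤ dot w (g τ)} :=
      convexHull_min (fun z hz => hgmax0 τ z hz) (convex_halfSpace_le (dot_isLinear w) _)
    exact this hy
  have hSsubP : ∀ τ, ∀ y ∈ S τ, y ∈ P τ := by
    intro τ y hy
    rw [hS2 τ]
    exact subset_convexHull ℝ _ hy
  have hgQ : (∑ τ, g τ) ∈ minkSum P := ⟨g, fun τ => hSsubP τ _ (hgmem τ), rfl⟩
  have hdoteq : dot w (∑ τ, g τ) = dot w x := by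
    refine le_antisymm (hmax _ hgQ) ?_
    rw [hg0sum, dot_sum_right, dot_sum_right]
    exact Finset.sum_le_sum fun τ _ => hmaxP τ _ (hg0P τ)
  have hgface : (∑ τ, g τ) ∈ face w (minkSum P) :=
    ⟨hgQ, fun z hz => (hmax z hz).trans hdoteq.symm.le⟩
  have hgx : x = ∑ τ, g τ := by
    rw [hw] at hgface
    exact hgface.symm
  refine ⟨w, g, hgmem, hgx, ?_⟩
  intro τ y hy hyne
  by_contra hcon
  have heq : dot w y = dot w (g τ) := le_antisymm (hgmax0 τ y hy) (not_lt.mp hcon)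
  set g' := Function.update g τ y with hg'
  have hg'P : ∀ τ', g' τ' ∈ P τ' := by
    intro τ'
    rcases eq_or_ne τ' τ with rfl | hne
    · rw [hg', Function.update_self]
      exact hSsubP τ' y hy
    · rw [hg', Function.update_of_ne hne]
      exact hSsubP τ' _ (hgmem τ')
  have hsum' : ∑ τ', g' τ' = y + ∑ τ' ∈ univ \ {τ}, g τ' :=
    Finset.sum_update_of_mem (mem_univ τ) g y
  have hsumg : ∑ τ', g τ' = g τ + ∑ τ' ∈ univ \ {τ}, g τ' := by
    conv_lhs => rw [show g = Function.update g τ (g τ) by rw [Function.update_eq_self]]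
    exact Finset.sum_update_of_mem (mem_univ τ) g (g τ)
  have hdot' : dot w (∑ τ', g' τ') = dot w (∑ τ', g τ') := by
    rw [hsum', hsumg, dot_add_right, dot_add_right, heq]
  have hg'Q : (∑ τ', g' τ') ∈ minkSum P := ⟨g', hg'P, rfl⟩
  have hg'face : (∑ τ', g' τ') ∈ face w (minkSum P) :=
    ⟨hg'Q, fun z hz => (hmax z hz).trans (hdot'.trans hdoteq).symm.le⟩
  have : (∑ τ', g' τ') = x := by rw [hw] at hg'face; exact hg'face
  rw [hgx] at this
  rw [hsum', hsumg] at this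
  exact hyne (add_right_cancel this)

lemma perturb {d : ℕ} {T : Type*} [Fintype T] (w u : Fin d → ℝ) (E : Finset (Fin d → ℝ))
    (hu : ∀ e ∈ E, dot u e ≠ 0)
    (S : T → Finset (Fin d → ℝ)) (g : T → (Fin d → ℝ))
    (hstrict : ∀ τ, ∀ y ∈ S τ, y ≠ g τ → dot w y < dot w (g τ)) :
    ∃ w', (∀ e ∈ E, dot w' e ≠ 0) ∧ ∀ τ, ∀ y ∈ S τ, y ≠ g τ → dot w' y < dot w' (g τ) := by
  classical
  set C : Finset ((_ : T) × (Fin d → ℝ)) := univ.sigma (fun τ => (S τ).erase (g τ)) with hC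
  have hev : ∀ᶠ t in nhds (0:ℝ), ∀ p ∈ C, dot (w + t • u) p.2 < dot (w + t • u) (g p.1) := by
    rw [Filter.eventually_all_finset]
    intro p hp
    rw [hC, Finset.mem_sigma] at hp
    obtain ⟨-, hp2⟩ := hp
    rw [Finset.mem_erase] at hp2
    have hlt : dot w p.2 < dot w (g p.1) := hstrict p.1 p.2 hp2.2 hp2.1
    have c1 : ContinuousAt (fun t : ℝ => dot (w + t • u) p.2) 0 := by
      simp only [dot_line]
      exact (continuous_const.add (continuous_id'.mul continuous_const)).continuousAt
    have c2 : ContinuousAt (fun t : ℝ => dot (w + t • u) (g p.1)) 0 := by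
      simp only [dot_line]
      exact (continuous_const.add (continuous_id'.mul continuous_const)).continuousAt
    refine ContinuousAt.eventually_lt c1 c2 ?_
    simpa [dot_line] using hlt
  obtain ⟨ε, hε, hball⟩ := Metric.eventually_nhds_iff.mp hev
  set Bad : Set ℝ := ⋃ e ∈ (E : Set (Fin d → ℝ)), {t : ℝ | dot (w + t • u) e = 0} with hBadDef
  have hBadFin : Bad.Finite := by
    refine Set.Finite.biUnion E.finite_toSet (fun e he => ?_)
    refine Set.Finite.subset (Set.finite_singleton (-(dot w e) / dot u e)) ?_
    intro t ht
    simp only [Set.mem_setOf_eq] at ht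
    rw [dot_line] at ht
    have hB := hu e he
    rw [Set.mem_singleton_iff]
    field_simp
    linarith
  obtain ⟨t, ht⟩ := ((Set.Ioo_infinite hε).diff hBadFin).nonempty
  obtain ⟨⟨ht0, htε⟩, htB⟩ := ht
  refine ⟨w + t • u, ?_, ?_⟩
  · intro e he hc
    exact htB (Set.mem_biUnion he hc)
  · intro τ y hy hne
    have hdist : dist t 0 < ε := by
      rw [Real.dist_eq, sub_zero, abs_of_pos ht0]
      exact htε
    have := hball hdist
    exact this ⟨τ, y⟩ (by rw [hC, Finset.mem_sigma]; exact ⟨mem_univ _, Finset.mem_erase.mpr ⟨hne, hy⟩⟩)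

/-- If `P_τ`, `τ ∈ T`, are lattice polytopes contained in `[0,M]^d`, then the Minkowski sum
`∑_{τ∈T} P_τ` has at most `2 * ∑_{j=0}^{d-1} ((2M+1)^d - 1 choose j)` vertices; this bound is
independent of the number of polytopes `|T|`. -/
theorem card_vertices_minkSum_lattice {d : ℕ} (hd : 0 < d) (M : ℕ) (hM : 0 < M)
    {T : Type*} [Fintype T] (P : T → Set (Fin d → ℝ))
    (hP : ∀ τ, ∃ S : Finset (Fin d → ℝ),
      (∀ x ∈ S, ∃ a : Fin d → ℤ, (∀ i, 0 ≤ a i ∧ a i ≤ (M : ℤ)) ∧ x = fun i => (a i : ℝ)) ∧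
      P τ = convexHull ℝ (S : Set (Fin d → ℝ))) :
    {x | IsVertex (minkSum P) x}.Finite ∧
      {x | IsVertex (minkSum P) x}.ncard ≤
        2 * ∑ j ∈ Finset.range d, Nat.choose ((2 * M + 1) ^ d - 1) j := by
  classical
  choose S hS1 hS2 using hP
  set Lat : Finset (Fin d → ℤ) := Fintype.piFinset (fun _ : Fin d => Finset.Icc (-(M:ℤ)) (M:ℤ))
    with hLat
  set E : Finset (Fin d → ℝ) := (Lat.erase 0).image (fun a => fun i => ((a i : ℤ) : ℝ)) with hE
  set u : Fin d → ℝ := fun i => ((2*(M:ℤ)+1 : ℤ) : ℝ)^(i:ℕ) with hu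
  have huE : ∀ e ∈ E, dot u e ≠ 0 := by
    intro e he
    rw [hE, Finset.mem_image] at he
    obtain ⟨a, ha, rfl⟩ := he
    rw [Finset.mem_erase] at ha
    obtain ⟨hane, haLat⟩ := ha
    refine udot a (fun i => ?_) hane
    have h0 := Fintype.mem_piFinset.mp haLat i
    rw [Finset.mem_Icc] at h0
    rw [abs_le]
    exact ⟨h0.1, h0.2⟩
  set n := E.card with hn
  set vv : Fin n → (Fin d → ℝ) := fun i => ((E.equivFin.symm i : {x // x ∈ E}) : Fin d → ℝ)
    with hvv
  have hvvE : ∀ i, vv i ∈ E := fun i => (E.equivFin.symm i).2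
  have hvve : ∀ e ∈ E, ∃ i, vv i = e := by
    intro e he
    refine ⟨E.equivFin ⟨e, he⟩, ?_⟩
    rw [hvv]
    simp
  set VS : Set (Fin d → ℝ) := {x | IsVertex (minkSum P) x} with hVS
  have hdata : ∀ x ∈ VS, ∃ (w : Fin d → ℝ) (g : T → (Fin d → ℝ)),
      (∀ e ∈ E, dot w e ≠ 0) ∧ (∀ τ, g τ ∈ S τ) ∧ x = ∑ τ, g τ ∧
      ∀ τ, ∀ y ∈ S τ, y ≠ g τ → dot w y < dot w (g τ) := by
    intro x hx
    obtain ⟨w0, g, hgmem, hgx, hstrict⟩ := vertex_data P S hS2 x hx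
    obtain ⟨w, hwE, hwstrict⟩ := perturb w0 u E huE S g hstrict
    exact ⟨w, g, hwE, hgmem, hgx, hwstrict⟩
  choose! w g hwE hgS hgsum hgmax using hdata
  set σ : (Fin d → ℝ) → (Fin n → Bool) := fun x i => decide (0 < dot (w x) (vv i)) with hσ
  have hinj : Set.InjOn σ VS := by
    intro x1 hx1 x2 hx2 hs
    have hg12 : ∀ τ, g x1 τ = g x2 τ := by
      intro τ
      by_contra hne
      obtain ⟨a1, ha1, hga1⟩ := hS1 τ (g x1 τ) (hgS x1 hx1 τ)
      obtain ⟨a2, ha2, hga2⟩ := hS1 τ (g x2 τ) (hgS x2 hx2 τ)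
      have hsubeq : g x1 τ - g x2 τ = fun i => (((a1 - a2) i : ℤ) : ℝ) := by
        funext i
        rw [Pi.sub_apply, hga1, hga2]
        simp [Pi.sub_apply]
      have hmemE : g x1 τ - g x2 τ ∈ E := by
        rw [hE, Finset.mem_image]
        refine ⟨a1 - a2, ?_, hsubeq.symm⟩
        rw [Finset.mem_erase]
        constructor
        · intro hcon
          apply hne
          have : g x1 τ - g x2 τ = 0 := by rw [hsubeq, hcon]; funext i; simp
          have := sub_eq_zero.mp this
          exact this
        · rw [Fintype.mem_piFinset]
          intro i
          rw [Finset.mem_Icc, Pi.sub_apply]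
          have h1i := ha1 i
          have h2i := ha2 i
          omega
      obtain ⟨i, hi⟩ := hvve _ hmemE
      have h1 : 0 < dot (w x1) (vv i) := by
        rw [hi, dot_sub_right]
        have := hgmax x1 hx1 τ (g x2 τ) (hgS x2 hx2 τ) (Ne.symm hne)
        linarith
      have h2 : ¬ (0 < dot (w x2) (vv i)) := by
        rw [hi, dot_sub_right]
        have := hgmax x2 hx2 τ (g x1 τ) (hgS x1 hx1 τ) hne
        intro hcon
        linarith
      have hcf := congrFun hs i
      rw [hσ] at hcf
      simp only [decide_eq_decide] at hcf
      exact h2 (hcf.mp h1)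
    rw [hgsum x1 hx1, hgsum x2 hx2]
    exact Finset.sum_congr rfl (fun τ _ => hg12 τ)
  have himg : σ '' VS ⊆ patSet ⊤ vv := by
    rintro s ⟨x, hx, rfl⟩
    exact ⟨w x, Submodule.mem_top, fun i => hwE x hx _ (hvvE i), fun i => rfl⟩
  have hn1 : 1 ≤ n := by
    have hone : ((fun _ => ((1:ℤ) : ℝ)) : Fin d → ℝ) ∈ E := by
      rw [hE, Finset.mem_image]
      refine ⟨fun _ => (1:ℤ), ?_, rfl⟩
      rw [Finset.mem_erase]
      constructor
      · intro hcon
        have := congrFun hcon ⟨0, hd⟩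
        simp at this
      · rw [Fintype.mem_piFinset]
        intro i
        rw [Finset.mem_Icc]
        constructor <;> omega
    rw [hn]
    exact Finset.card_pos.mpr ⟨_, hone⟩
  have hIcc : (Finset.Icc (-(M:ℤ)) (M:ℤ)).card = 2*M+1 := by
    rw [Int.card_Icc]
    omega
  have hLatcard : Lat.card = (2*M+1)^d := by
    rw [hLat, Fintype.card_piFinset]
    simp [hIcc]
  have h0Lat : (0 : Fin d → ℤ) ∈ Lat := by
    rw [hLat, Fintype.mem_piFinset]
    intro i
    rw [Finset.mem_Icc]
    constructor <;> simp
  have hncard : n ≤ (2*M+1)^d - 1 := by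
    have h1 : n ≤ (Lat.erase 0).card := Finset.card_image_le
    have h2 : (Lat.erase 0).card = Lat.card - 1 := Finset.card_erase_of_mem h0Lat
    omega
  have hrank : Module.finrank ℝ (⊤ : Submodule ℝ (Fin d → ℝ)) ≤ d := by
    rw [finrank_top]
    rw [Module.finrank_fin_fun ℝ]
  have hcount := patSet_card n hn1 d ⊤ hrank vv
  have hfin : VS.Finite := Set.Finite.of_finite_image (Set.toFinite _) hinj
  refine ⟨hfin, ?_⟩
  rw [← Set.ncard_image_of_injOn hinj]
  refine le_trans (Set.ncard_le_ncard himg (Set.toFinite _)) (le_trans hcount ?_)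
  refine Nat.mul_le_mul_left 2 (Finset.sum_le_sum fun j _ => Nat.choose_le_choose j ?_)
  omega
end
end

section
/- Suppose a^{(1)}, ..., a^{(d-1)} and c^{(1)}, ..., c^{(d-1)} are vectors in Z_{>0}^d lying in the closed regions defined by ‖(n/d)·b^{(i)} − a^{(i)}‖_∞ < (n/d)·s and ‖(n/d)·b^{(i)} − c^{(i)}‖_∞ < (n/d)·s, where b^{(i)} = (1,...,1) − (1/2)e_i and s = 1/(4d+4). Assume {a^{(1)},...,a^{(d-1)}} is a Z-basis of the lattice Z^d ∩ span_R{a^{(1)},...,a^{(d-1)}}, and that ∩_{i=1}^{d-1}{x : ⟨a^{(i)},x⟩=0} = ∩_{i=1}^{d-1}{x : ⟨c^{(i)},x⟩=0} as subsets of R^d. Then a^{(j)} = c^{(j)} for all j. -/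
/-!
Equal kernels give equal real spans, so `c j = ∑ i, α i • a i` for an integer vector `α` by the
basis hypothesis. As `a i ≈ t • b i` and `c j ≈ t • b j` up to `t s` in every coordinate
(`t = n/d`, `s = 1/(4d+4)`), the combination `∑ i, α i • b i` is within `s (‖α‖₁ + 1)` of
`b j`. The coefficients of a combination of the `b i` are twice the differences between its
last coordinate and its other ones, so `|α i - δ i j| < 4 s (‖α‖₁ + 1) = (‖α‖₁ + 1) / (d + 1)`.
Summing over `i` gives `‖α‖₁ + 1 < d + 1`, so all these errors are below `1` and integrality
forces `α = e_j`.
-/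
noncomputable section

/-- `b^{(i)} = (1,…,1) - (1/2) e_i` as a vector in `ℝ^d`, for `i` among the first `d-1`
coordinates. -/
def bvec (d : ℕ) (i : Fin (d - 1)) : Fin d → ℝ :=
  fun k => if (k : ℕ) = (i : ℕ) then 1 / 2 else 1

open Matrix

theorem mem_span_of_forall_dotProduct_eq_zero {K ι m : Type*} [Field K] [Fintype m]
    [DecidableEq m] (v : ι → m → K) (w : m → K)
    (h : ∀ x, (∀ i, v i ⬝ᵥ x = 0) → w ⬝ᵥ x = 0) :
    w ∈ Submodule.span K (Set.range v) := by
  by_contra hw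
  obtain ⟨f, hfw, hf⟩ := Submodule.exists_dual_map_eq_bot_of_notMem hw inferInstance
  have hf_eq : ∀ u, f u = u ⬝ᵥ fun k => f (Pi.single k 1) := by
    intro u
    conv_lhs => rw [pi_eq_sum_univ' u, map_sum]
    simp [dotProduct]
  refine hfw ?_
  rw [hf_eq]
  refine h _ fun i => ?_
  rw [← hf_eq, ← Submodule.mem_bot K, ← hf]
  exact Submodule.mem_map_of_mem (Submodule.subset_span ⟨i, rfl⟩)

theorem abs_sum_mul_sub_lt_of_abs_mul_sub_lt {ι : Type*} [Fintype ι] {t r : ℝ} (ht : 0 < t)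
    (α x y : ι → ℝ) {x' y' : ℝ} (hxy : ∀ i, |t * x i - y i| ≤ t * r)
    (hxy' : |t * x' - y'| < t * r) (hy' : y' = ∑ i, α i * y i) :
    |∑ i, α i * x i - x'| < (∑ i, |α i| + 1) * r := by
  have hsum : |∑ i, α i * (t * x i - y i)| ≤ (∑ i, |α i|) * (t * r) :=
    calc |∑ i, α i * (t * x i - y i)| ≤ ∑ i, |α i * (t * x i - y i)| :=
          Finset.abs_sum_le_sum_abs _ _
      _ ≤ ∑ i, |α i| * (t * r) := by
          gcongr with i
          rw [abs_mul]
          exact mul_le_mul_of_nonneg_left (hxy i) (abs_nonneg _)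
      _ = (∑ i, |α i|) * (t * r) := (Finset.sum_mul _ _ _).symm
  have hsplit : t * (∑ i, α i * x i - x') = ∑ i, α i * (t * x i - y i) - (t * x' - y') := by
    simp only [hy', mul_sub, Finset.mul_sum, Finset.sum_sub_distrib]
    ring_nf
  rw [← mul_lt_mul_iff_right₀ ht, ← abs_of_pos ht, ← abs_mul, hsplit, abs_of_pos ht]
  calc _ ≤ |∑ i, α i * (t * x i - y i)| + |t * x' - y'| := abs_sub _ _
    _ < (∑ i, |α i|) * (t * r) + t * r := add_lt_add_of_le_of_lt hsum hxy'
    _ = t * ((∑ i, |α i| + 1) * r) := by ring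

theorem eq_single_of_abs_sub_single_lt {ι : Type*} [Fintype ι] [DecidableEq ι] (α : ι → ℤ)
    (j : ι) (h : ∀ i, |(α i : ℝ) - (Pi.single j 1 : ι → ℝ) i| <
      (∑ i, |(α i : ℝ)| + 1) / (Fintype.card ι + 2)) :
    α = Pi.single j 1 := by
  set e : ι → ℝ := Pi.single j 1
  set M := ∑ i, |(α i : ℝ)|
  set q := (M + 1) / (Fintype.card ι + 2)
  have hq : M + 1 = q * (Fintype.card ι + 2) := by
    simp only [q]; field_simp
  have hM : M ≤ ∑ i, |(α i : ℝ) - e i| + 1 :=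
    calc M ≤ ∑ i, (|(α i : ℝ) - e i| + |e i|) :=
          Finset.sum_le_sum fun i _ => sub_le_iff_le_add.mp (abs_sub_abs_le_abs_sub _ _)
      _ = ∑ i, |(α i : ℝ) - e i| + 1 := by
          rw [Finset.sum_add_distrib]
          simp [e, Pi.single_apply, apply_ite]
  have hlt : ∑ i, |(α i : ℝ) - e i| < Fintype.card ι * q :=
    calc _ < ∑ _i : ι, q := Finset.sum_lt_sum_of_nonempty ⟨j, Finset.mem_univ j⟩ fun i _ => h i
      _ = Fintype.card ι * q := by simp
  have hq1 : q < 1 := by nlinarith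
  funext i
  have hi : |((α i - (Pi.single j 1 : ι → ℤ) i : ℤ) : ℝ)| < 1 := by
    rcases eq_or_ne i j with rfl | hij
    · simpa [e] using (h i).trans hq1
    · simpa [e, hij] using (h i).trans hq1
  exact sub_eq_zero.mp (Int.abs_lt_one_iff.mp (by exact_mod_cast hi))

section bvec

variable {d : ℕ}

theorem sum_mul_bvec_of_le (α : Fin (d - 1) → ℝ) {k : Fin d} (hk : d - 1 ≤ k) :
    ∑ i, α i * bvec d i k = ∑ i, α i := by
  refine Finset.sum_congr rfl fun i _ => ?_
  have hki : (k : ℕ) ≠ i := by omega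
  simp [bvec, hki]

theorem sum_mul_bvec_castLE (α : Fin (d - 1) → ℝ) (j : Fin (d - 1)) :
    ∑ i, α i * bvec d i (Fin.castLE (Nat.sub_le d 1) j) = ∑ i, α i - α j / 2 := by
  have hterm : ∀ i, α i * bvec d i (Fin.castLE (Nat.sub_le d 1) j) =
      α i - if i = j then α j / 2 else 0 := by
    intro i
    rcases eq_or_ne i j with rfl | hij
    · simp only [bvec, Fin.val_castLE, if_pos]; ring
    · have : (j : ℕ) ≠ i := fun h => hij (Fin.ext h.symm)
      simp [bvec, this, hij]
  simp [hterm, Finset.sum_sub_distrib]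

theorem abs_lt_four_mul_of_abs_sum_mul_bvec_lt {β : Fin (d - 1) → ℝ} {δ : ℝ}
    (h : ∀ k, |∑ i, β i * bvec d i k| < δ) (j : Fin (d - 1)) : |β j| < 4 * δ := by
  have hlast := h ⟨d - 1, by have := j.isLt; omega⟩
  have hj := h (Fin.castLE (Nat.sub_le d 1) j)
  rw [sum_mul_bvec_of_le β le_rfl] at hlast
  rw [sum_mul_bvec_castLE] at hj
  rw [abs_lt] at hlast hj ⊢
  constructor <;> linarith [hlast.1, hlast.2, hj.1, hj.2]

end bvec

theorem rays_determine_normals_general (d n : ℕ) (hn : 0 < n)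
    (a c : Fin (d - 1) → Fin d → ℤ)
    (ha : ∀ i k, |(n : ℝ) / d * bvec d i k - (a i k : ℝ)| < (n : ℝ) / d * (1 / (4 * d + 4)))
    (hc : ∀ i k, |(n : ℝ) / d * bvec d i k - (c i k : ℝ)| < (n : ℝ) / d * (1 / (4 * d + 4)))
    (hbasis : ∀ z : Fin d → ℤ,
      (fun k => (z k : ℝ)) ∈
          Submodule.span ℝ (Set.range fun i : Fin (d - 1) => fun k => ((a i k : ℝ))) →
      ∃ α : Fin (d - 1) → ℤ, ∀ k, z k = ∑ i, α i * a i k)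
    (hker : {x : Fin d → ℝ | ∀ i, ∑ k, (a i k : ℝ) * x k = 0} =
            {x : Fin d → ℝ | ∀ i, ∑ k, (c i k : ℝ) * x k = 0}) :
    a = c := by
  funext j
  have hd : 1 ≤ d := by have := j.isLt; omega
  obtain ⟨α, hα⟩ := hbasis (c j) <| mem_span_of_forall_dotProduct_eq_zero _ _
    fun x hx => (Set.ext_iff.mp hker x).mp hx j
  have hclose : ∀ k, |∑ i, (α i : ℝ) * bvec d i k - bvec d j k| <
      (∑ i, |(α i : ℝ)| + 1) * (1 / (4 * d + 4)) :=
    fun k => abs_sum_mul_sub_lt_of_abs_mul_sub_lt (by positivity) _ (bvec d · k) (a · k)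
      (fun i => (ha i k).le) (hc j k) (by exact_mod_cast hα k)
  have hcoeff : ∀ i, |(α i : ℝ) - (Pi.single j 1 : Fin (d - 1) → ℝ) i| <
      4 * ((∑ i, |(α i : ℝ)| + 1) * (1 / (4 * d + 4))) := by
    refine abs_lt_four_mul_of_abs_sum_mul_bvec_lt fun k => ?_
    simpa [sub_mul, Finset.sum_sub_distrib, Pi.single_apply] using hclose k
  have hα_eq : α = Pi.single j 1 := by
    refine eq_single_of_abs_sub_single_lt α j fun i => (hcoeff i).trans_eq ?_
    rw [Fintype.card_fin, Nat.cast_sub hd, Nat.cast_one,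
      show (d : ℝ) - 1 + 2 = (4 * d + 4) / 4 by ring]
    field_simp
  funext k
  simp [hα k, hα_eq, Pi.single_apply]

/-- If `a^{(1)},…,a^{(d-1)}` and `c^{(1)},…,c^{(d-1)}` are positive integer vectors with
`‖(n/d)b^{(i)} - a^{(i)}‖_∞ < (n/d)s` and `‖(n/d)b^{(i)} - c^{(i)}‖_∞ < (n/d)s` where
`s = 1/(4d+4)`, the `a^{(i)}` form a `ℤ`-basis of `ℤ^d ∩ span_ℝ{a^{(i)}}`, and the two
intersections of kernel hyperplanes coincide, then `a^{(j)} = c^{(j)}` for all `j`. -/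
theorem rays_determine_normals (d n : ℕ) (hd : 2 ≤ d) (hn : 0 < n)
    (a c : Fin (d - 1) → Fin d → ℤ)
    (hapos : ∀ i k, 0 < a i k) (hcpos : ∀ i k, 0 < c i k)
    (ha : ∀ i k, |(n : ℝ) / d * bvec d i k - (a i k : ℝ)| < (n : ℝ) / d * (1 / (4 * d + 4)))
    (hc : ∀ i k, |(n : ℝ) / d * bvec d i k - (c i k : ℝ)| < (n : ℝ) / d * (1 / (4 * d + 4)))
    (hbasis : ∀ z : Fin d → ℤ,
      (fun k => (z k : ℝ)) ∈
          Submodule.span ℝ (Set.range fun i : Fin (d - 1) => fun k => ((a i k : ℝ))) →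
      ∃ α : Fin (d - 1) → ℤ, ∀ k, z k = ∑ i, α i * a i k)
    (hker : {x : Fin d → ℝ | ∀ i, ∑ k, (a i k : ℝ) * x k = 0} =
            {x : Fin d → ℝ | ∀ i, ∑ k, (c i k : ℝ) * x k = 0}) :
    a = c :=
  rays_determine_normals_general d n hn a c ha hc hbasis hker
end
end

section
/- Let d ≥ 2, n ≥ 1, and let α_1, ..., α_{d-1} be integers with α_1, ..., α_k ≥ 0, α_{k+1}, ..., α_{d-1} ≤ 0, and |α_1| maximal among all |α_i|. Set s = 1/(4d+4), b^{(i)} = (1,...,1) − (1/2)e_i ∈ R^d, and suppose g = α_1 a^{(1)} + ... + α_{d-1} a^{(d-1)} where each a^{(i)} ∈ R^d satisfies ‖(n/d)b^{(i)} − a^{(i)}‖_∞ < (n/d)s, and suppose ‖g‖_∞ < 2(n/d)s. Then α_1 = 0, and hence g = 0. -/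
/-!
Write `c = n/d`, `s = 1/(4d+4)` and `S = ∑ |α_i|`. Since each `a^{(i)}` is within `c s` of
`c b^{(i)}` and `g` is within `2 c s` of `0`, every coordinate of `∑ α_i b^{(i)}` has absolute
value below `(2 + S) s`. The last coordinate of this vector is `∑ α_i`, the first one is
`∑ α_i - α_1 / 2`; their difference gives `|α_1| < 4 (2 + S) s ≤ 4 (2 + (d-1)|α_1|) s`, which
rearranges to `|α_1| < 1`. Maximality of `|α_1|` then kills every `α_i`.
-/

noncomputable section

open Finset

section Approximation

variable {ι R : Type*} [CommRing R] [LinearOrder R] [IsStrictOrderedRing R]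

lemma abs_sum_mul_sub_sum_mul_le (s : Finset ι) (w x y : ι → R) {r : R}
    (hxy : ∀ i ∈ s, |x i - y i| ≤ r) :
    |∑ i ∈ s, w i * x i - ∑ i ∈ s, w i * y i| ≤ (∑ i ∈ s, |w i|) * r := by
  rw [← sum_sub_distrib, sum_mul]
  refine (abs_sum_le_sum_abs _ _).trans (sum_le_sum fun i hi => ?_)
  rw [← mul_sub, abs_mul]
  exact mul_le_mul_of_nonneg_left (hxy i hi) (abs_nonneg _)

lemma abs_sum_mul_lt_of_abs_sub_le (s : Finset ι) (w x y : ι → R) {r t : R}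
    (hxy : ∀ i ∈ s, |x i - y i| ≤ r) (hy : |∑ i ∈ s, w i * y i| < t) :
    |∑ i ∈ s, w i * x i| < t + (∑ i ∈ s, |w i|) * r := by
  linarith [abs_sub_abs_le_abs_sub (∑ i ∈ s, w i * x i) (∑ i ∈ s, w i * y i),
    abs_sum_mul_sub_sum_mul_le s w x y hxy]

end Approximation

section Bvec

variable {d : ℕ}

lemma sum_mul_bvec_of_val_eq (x : Fin (d - 1) → ℝ) (i₀ : Fin (d - 1)) (j : Fin d)
    (hj : (j : ℕ) = i₀) : ∑ i, x i * bvec d i j = ∑ i, x i - x i₀ / 2 := by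
  have hterm : ∀ i, x i * bvec d i j = x i - if i = i₀ then x i / 2 else 0 := by
    intro i
    by_cases hi : i = i₀
    · simp [bvec, hi, hj]; ring
    · have : (j : ℕ) ≠ i := by rw [hj]; exact fun h => hi (Fin.ext h).symm
      simp [bvec, hi, this]
  simp only [hterm, sum_sub_distrib, sum_ite_eq', mem_univ, if_true]

lemma sum_mul_bvec_of_le_val (x : Fin (d - 1) → ℝ) (j : Fin d) (hj : d - 1 ≤ j) :
    ∑ i, x i * bvec d i j = ∑ i, x i :=
  sum_congr rfl fun i _ => by simp [bvec, show (j : ℕ) ≠ i by omega]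

lemma abs_lt_one_of_abs_sum_mul_bvec_lt (x : Fin (d - 1) → ℝ) (i₀ : Fin (d - 1))
    (hmax : ∀ i, |x i| ≤ |x i₀|)
    (hsmall : ∀ j, |∑ i, x i * bvec d i j| < (2 + ∑ i, |x i|) * (1 / (4 * d + 4))) :
    |x i₀| < 1 := by
  have hd : 2 ≤ d := by have := i₀.isLt; omega
  set S := ∑ i, |x i|
  have hlast := hsmall ⟨d - 1, by omega⟩
  have hcoord := hsmall ⟨i₀, by omega⟩
  rw [sum_mul_bvec_of_le_val x _ le_rfl] at hlast
  rw [sum_mul_bvec_of_val_eq x i₀ _ rfl] at hcoord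
  have hhalf : |x i₀| / 2 ≤ |∑ i, x i| + |∑ i, x i - x i₀ / 2| := by
    simpa [abs_div] using abs_sub (∑ i, x i) (∑ i, x i - x i₀ / 2)
  have hS : S ≤ (d - 1) * |x i₀| := by
    calc S ≤ (univ : Finset (Fin (d - 1))).card • |x i₀| :=
          sum_le_card_nsmul _ _ _ fun i _ => hmax i
      _ = (d - 1) * |x i₀| := by simp [Nat.cast_sub (by omega : 1 ≤ d)]
  have key : |x i₀| / 2 * (4 * d + 4) < 2 * (2 + S) :=
    calc |x i₀| / 2 * (4 * d + 4) < 2 * ((2 + S) * (1 / (4 * d + 4))) * (4 * d + 4) := by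
          gcongr; linarith [hhalf.trans_lt (add_lt_add hlast hcoord)]
      _ = 2 * (2 + S) := by field_simp
  linarith

end Bvec

theorem small_combination_vanishes (d n : ℕ) (hd : 2 ≤ d)
    (α : Fin (d - 1) → ℤ)
    (hmax : ∀ i, |α i| ≤ |α ⟨0, by omega⟩|)
    (a : Fin (d - 1) → Fin d → ℝ)
    (ha : ∀ i j, |(n : ℝ) / d * bvec d i j - a i j| < (n : ℝ) / d * (1 / (4 * d + 4)))
    (g : Fin d → ℝ) (hg : g = fun j => ∑ i, (α i : ℝ) * a i j)
    (hgsmall : ∀ j, |g j| < 2 * ((n : ℝ) / d) * (1 / (4 * d + 4))) :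
    α ⟨0, by omega⟩ = 0 ∧ g = 0 := by
  set c : ℝ := n / d
  set s : ℝ := 1 / (4 * d + 4)
  have hs : 0 < s := by positivity
  have hc : 0 < c :=
    pos_of_mul_pos_left ((abs_nonneg _).trans_lt (ha ⟨0, by omega⟩ ⟨0, by omega⟩)) hs.le
  have hcomb : ∀ j, |∑ i, (α i : ℝ) * bvec d i j| < (2 + ∑ i, |(α i : ℝ)|) * s := by
    intro j
    have h := abs_sum_mul_lt_of_abs_sub_le univ (fun i => (α i : ℝ)) (fun i => c * bvec d i j)
      (fun i => a i j) (fun i _ => (ha i j).le) (by simpa [hg, mul_assoc] using hgsmall j)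
    simp only [mul_left_comm _ c, ← mul_sum, abs_mul, abs_of_pos hc] at h
    exact lt_of_mul_lt_mul_left (by linarith) hc.le
  have hα₀ : |(α ⟨0, by omega⟩ : ℝ)| < 1 :=
    abs_lt_one_of_abs_sum_mul_bvec_lt _ _ (fun i => by exact_mod_cast hmax i) hcomb
  have h₀ : α ⟨0, by omega⟩ = 0 := Int.abs_lt_one_iff.mp (by exact_mod_cast hα₀)
  have hzero : ∀ i, α i = 0 := fun i => abs_nonpos_iff.mp (by simpa [h₀] using hmax i)
  refine ⟨h₀, ?_⟩
  funext j
  simp [hg, hzero]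
end
end

section
/- For positive integers u < v, set a = 2v, b = v − u, and n = 2a + 2b = 6v − 2u. Consider the binary strings σ¹ = 0^a 1^b 0^b 1^a and σ² = 1^a 0^b 1^b 0^a of length n. Then the convex hull of the set of points (y', z) ∈ Z² over all alignments of σ¹ and σ², where y' is the number of insertions (half the number of spaces) and z the number of matches, has an edge of slope u/v; specifically, it contains the vertices (b, 3b) and (a+b, a+b), and the segment between them is an edge of the convex hull, with slope (a − 2b)/a = u/v. -/
noncomputable section

def IsAlignment (σ1 σ2 : List Bool) (A : List (Option Bool × Option Bool)) : Prop :=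
  (none, none) ∉ A ∧ A.filterMap Prod.fst = σ1 ∧ A.filterMap Prod.snd = σ2

def nMatches (A : List (Option Bool × Option Bool)) : ℕ :=
  (A.filter fun p => p.1.isSome && p.2.isSome && (p.1 == p.2)).length

def nSpaces (A : List (Option Bool × Option Bool)) : ℕ :=
  (A.filter fun p => p.1.isNone != p.2.isNone).length

/-- The dot product on `ℝ × ℝ`. -/
def dot2 (w x : ℝ × ℝ) : ℝ := w.1 * x.1 + w.2 * x.2

/-- The face of a set `P ⊆ ℝ²` in direction `w`. -/
def face2 (w : ℝ × ℝ) (P : Set (ℝ × ℝ)) : Set (ℝ × ℝ) :=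
  {x | x ∈ P ∧ ∀ y ∈ P, dot2 w y ≤ dot2 w x}

namespace AlnAux

def XX (p q r s : ℕ) : List Bool :=
  List.replicate p false ++ List.replicate q true ++ List.replicate r false ++ List.replicate s true

def YY (p q r s : ℕ) : List Bool :=
  List.replicate p true ++ List.replicate q false ++ List.replicate r true ++ List.replicate s false

def bx (p q r s : ℕ) : ℕ := if p ≠ 0 then 1 else if q ≠ 0 then 2 else if r ≠ 0 then 3 else 4

lemma bx_pos (p q r s : ℕ) : 1 ≤ bx p q r s := by unfold bx; split_ifs <;> omega
lemma bx_le4 (p q r s : ℕ) : bx p q r s ≤ 4 := by unfold bx; split_ifs <;> omega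
lemma bx_ge2 (q r s : ℕ) : 2 ≤ bx 0 q r s := by unfold bx; split_ifs <;> omega
lemma bx_ge3 (r s : ℕ) : 3 ≤ bx 0 0 r s := by unfold bx; split_ifs <;> omega
lemma bx_ge4 (s : ℕ) : 4 ≤ bx 0 0 0 s := by unfold bx; split_ifs <;> omega

lemma XX_nil {p q r s : ℕ} (h : XX p q r s = []) : p = 0 ∧ q = 0 ∧ r = 0 ∧ s = 0 := by
  simp [XX, List.append_eq_nil_iff, List.replicate_eq_nil_iff] at h
  omega

lemma YY_nil {p q r s : ℕ} (h : YY p q r s = []) : p = 0 ∧ q = 0 ∧ r = 0 ∧ s = 0 := by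
  simp [YY, List.append_eq_nil_iff, List.replicate_eq_nil_iff] at h
  omega

lemma XX_cons {p q r s : ℕ} {c : Bool} {L : List Bool} (h : XX p q r s = c :: L) :
    (∃ p1, p = p1 + 1 ∧ c = false ∧ L = XX p1 q r s) ∨
    (p = 0 ∧ ∃ q1, q = q1 + 1 ∧ c = true ∧ L = XX 0 q1 r s) ∨
    (p = 0 ∧ q = 0 ∧ ∃ r1, r = r1 + 1 ∧ c = false ∧ L = XX 0 0 r1 s) ∨
    (p = 0 ∧ q = 0 ∧ r = 0 ∧ ∃ s1, s = s1 + 1 ∧ c = true ∧ L = XX 0 0 0 s1) := by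
  rcases p with _ | p1
  · rcases q with _ | q1
    · rcases r with _ | r1
      · rcases s with _ | s1
        · simp [XX] at h
        · right; right; right
          simp [XX, List.replicate_succ] at h
          exact ⟨rfl, rfl, rfl, s1, rfl, (by first | exact h.1 | exact h.1.symm), by simp [XX, h.2]⟩
      · right; right; left
        simp [XX, List.replicate_succ] at h
        exact ⟨rfl, rfl, r1, rfl, (by first | exact h.1 | exact h.1.symm), by simp [XX, h.2]⟩
    · right; left
      simp [XX, List.replicate_succ] at h
      exact ⟨rfl, q1, rfl, (by first | exact h.1 | exact h.1.symm), by simp [XX, h.2]⟩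
  · left
    simp [XX, List.replicate_succ] at h
    exact ⟨p1, rfl, (by first | exact h.1 | exact h.1.symm), by simp [XX, h.2]⟩

lemma YY_cons {p q r s : ℕ} {c : Bool} {L : List Bool} (h : YY p q r s = c :: L) :
    (∃ p1, p = p1 + 1 ∧ c = true ∧ L = YY p1 q r s) ∨
    (p = 0 ∧ ∃ q1, q = q1 + 1 ∧ c = false ∧ L = YY 0 q1 r s) ∨
    (p = 0 ∧ q = 0 ∧ ∃ r1, r = r1 + 1 ∧ c = true ∧ L = YY 0 0 r1 s) ∨
    (p = 0 ∧ q = 0 ∧ r = 0 ∧ ∃ s1, s = s1 + 1 ∧ c = false ∧ L = YY 0 0 0 s1) := by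
  rcases p with _ | p1
  · rcases q with _ | q1
    · rcases r with _ | r1
      · rcases s with _ | s1
        · simp [YY] at h
        · right; right; right
          simp [YY, List.replicate_succ] at h
          exact ⟨rfl, rfl, rfl, s1, rfl, (by first | exact h.1 | exact h.1.symm), by simp [YY, h.2]⟩
      · right; right; left
        simp [YY, List.replicate_succ] at h
        exact ⟨rfl, rfl, r1, rfl, (by first | exact h.1 | exact h.1.symm), by simp [YY, h.2]⟩
    · right; left
      simp [YY, List.replicate_succ] at h
      exact ⟨rfl, q1, rfl, (by first | exact h.1 | exact h.1.symm), by simp [YY, h.2]⟩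
  · left
    simp [YY, List.replicate_succ] at h
    exact ⟨p1, rfl, (by first | exact h.1 | exact h.1.symm), by simp [YY, h.2]⟩

def bump (m : ℕ → ℕ → ℕ) (i j : ℕ) : ℕ → ℕ → ℕ :=
  fun x y => if x = i ∧ y = j then m x y + 1 else m x y

def rsum (m : ℕ → ℕ → ℕ) (x : ℕ) : ℕ := m x 1 + m x 2 + m x 3 + m x 4
def csum (m : ℕ → ℕ → ℕ) (y : ℕ) : ℕ := m 1 y + m 2 y + m 3 y + m 4 y
def tsm (m : ℕ → ℕ → ℕ) : ℕ := rsum m 1 + rsum m 2 + rsum m 3 + rsum m 4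
def osum (m : ℕ → ℕ → ℕ) : ℕ :=
  m 1 2 + m 1 4 + m 2 1 + m 2 3 + m 3 2 + m 3 4 + m 4 1 + m 4 3

def chain (m : ℕ → ℕ → ℕ) : Prop :=
  ∀ x y x' y', x < x' → y' < y → m x y = 0 ∨ m x' y' = 0

def low (m : ℕ → ℕ → ℕ) (i j : ℕ) : Prop :=
  ∀ x y, m x y ≠ 0 → i ≤ x ∧ x ≤ 4 ∧ j ≤ y ∧ y ≤ 4

lemma chain_bump {m : ℕ → ℕ → ℕ} {i j : ℕ} (hch : chain m) (hlow : low m i j) :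
    chain (bump m i j) := by
  intro x y x' y' hx hy
  by_cases h1 : x = i ∧ y = j
  · by_cases h2 : x' = i ∧ y' = j
    · omega
    · rcases Classical.em (m x' y' = 0) with h0 | h0
      · right; simp [bump, h2, h0]
      · exact absurd (hlow x' y' h0).2.2.1 (by omega)
  · by_cases h2 : x' = i ∧ y' = j
    · rcases Classical.em (m x y = 0) with h0 | h0
      · left; simp [bump, h1, h0]
      · exact absurd (hlow x y h0).1 (by omega)
    · rcases hch x y x' y' hx hy with h0 | h0
      · left; simp [bump, h1, h0]
      · right; simp [bump, h2, h0]

lemma low_bump {m : ℕ → ℕ → ℕ} {i j : ℕ} (hi : 1 ≤ i) (hi4 : i ≤ 4) (hj : 1 ≤ j) (hj4 : j ≤ 4)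
    (hlow : low m i j) : low (bump m i j) i j := by
  intro x y h
  by_cases h1 : x = i ∧ y = j
  · omega
  · exact hlow x y (by simpa [bump, h1] using h)

lemma low_mono {m : ℕ → ℕ → ℕ} {i j i' j' : ℕ} (hii : i ≤ i') (hjj : j ≤ j')
    (hlow : low m i' j') : low m i j := fun x y h => by
  rcases hlow x y h with ⟨a1, a2, a3, a4⟩; exact ⟨by omega, a2, by omega, a4⟩

lemma rsum_bump_same {m : ℕ → ℕ → ℕ} {i j : ℕ} (hj : 1 ≤ j) (hj4 : j ≤ 4) :
    rsum (bump m i j) i = rsum m i + 1 := by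
  interval_cases j <;> simp [rsum, bump] <;> omega

lemma rsum_bump_ne {m : ℕ → ℕ → ℕ} {i j : ℕ} (k : ℕ) (hk : k ≠ i) :
    rsum (bump m i j) k = rsum m k := by
  simp [rsum, bump, hk]

lemma csum_bump_same {m : ℕ → ℕ → ℕ} {i j : ℕ} (hi : 1 ≤ i) (hi4 : i ≤ 4) :
    csum (bump m i j) j = csum m j + 1 := by
  interval_cases i <;> simp [csum, bump] <;> omega

lemma csum_bump_ne {m : ℕ → ℕ → ℕ} {i j : ℕ} (k : ℕ) (hk : k ≠ j) :
    csum (bump m i j) k = csum m k := by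
  simp [csum, bump, hk]

lemma tsum_bump {m : ℕ → ℕ → ℕ} {i j : ℕ} (hi : 1 ≤ i) (hi4 : i ≤ 4) (hj : 1 ≤ j) (hj4 : j ≤ 4) :
    tsm (bump m i j) = tsm m + 1 := by
  unfold tsm
  rcases Nat.lt_or_ge i 2 with h | h
  · have : i = 1 := by omega
    subst this
    rw [rsum_bump_same hj hj4, rsum_bump_ne 2 (by omega), rsum_bump_ne 3 (by omega),
      rsum_bump_ne 4 (by omega)]; omega
  · rcases Nat.lt_or_ge i 3 with h2 | h2
    · have : i = 2 := by omega
      subst this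
      rw [rsum_bump_same hj hj4, rsum_bump_ne 1 (by omega), rsum_bump_ne 3 (by omega),
        rsum_bump_ne 4 (by omega)]; omega
    · rcases Nat.lt_or_ge i 4 with h3 | h3
      · have : i = 3 := by omega
        subst this
        rw [rsum_bump_same hj hj4, rsum_bump_ne 1 (by omega), rsum_bump_ne 2 (by omega),
          rsum_bump_ne 4 (by omega)]; omega
      · have : i = 4 := by omega
        subst this
        rw [rsum_bump_same hj hj4, rsum_bump_ne 1 (by omega), rsum_bump_ne 2 (by omega),
          rsum_bump_ne 3 (by omega)]; omega

lemma osum_bump {m : ℕ → ℕ → ℕ} {i j : ℕ} (hi : 1 ≤ i) (hi4 : i ≤ 4) (hj : 1 ≤ j) (hj4 : j ≤ 4) :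
    osum (bump m i j) = osum m + ((i + j) % 2) := by
  interval_cases i <;> interval_cases j <;> simp [osum, bump] <;> omega


lemma bx_eq1 (p q r s : ℕ) : bx (p+1) q r s = 1 := by unfold bx; simp
lemma bx_eq2 (q r s : ℕ) : bx 0 (q+1) r s = 2 := by unfold bx; simp
lemma bx_eq3 (r s : ℕ) : bx 0 0 (r+1) s = 3 := by unfold bx; simp
lemma bx_eq4 (s : ℕ) : bx 0 0 0 (s+1) = 4 := by unfold bx; simp

theorem key (A : List (Option Bool × Option Bool)) :
    ∀ p q r s p2 q2 r2 s2 : ℕ,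
      A.filterMap Prod.fst = XX p q r s →
      A.filterMap Prod.snd = YY p2 q2 r2 s2 →
      ∃ m : ℕ → ℕ → ℕ,
        low m (bx p q r s) (bx p2 q2 r2 s2) ∧ chain m ∧
        rsum m 1 ≤ p ∧ rsum m 2 ≤ q ∧ rsum m 3 ≤ r ∧ rsum m 4 ≤ s ∧
        csum m 1 ≤ p2 ∧ csum m 2 ≤ q2 ∧ csum m 3 ≤ r2 ∧ csum m 4 ≤ s2 ∧
        nMatches A = osum m ∧
        nSpaces A + 2 * tsm m = (p + q + r + s) + (p2 + q2 + r2 + s2) := by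
  induction A with
  | nil =>
    intro p q r s p2 q2 r2 s2 h1 h2
    simp only [List.filterMap_nil] at h1 h2
    obtain ⟨rfl, rfl, rfl, rfl⟩ := XX_nil h1.symm
    obtain ⟨rfl, rfl, rfl, rfl⟩ := YY_nil h2.symm
    refine ⟨fun _ _ => 0, fun x y h => absurd rfl h, fun x y x2 y2 _ _ => Or.inl rfl, ?_, ?_, ?_, ?_, ?_, ?_, ?_, ?_, ?_, ?_⟩ <;>
      simp [rsum, csum, tsm, osum, nMatches, nSpaces]
  | cons hd tl ih =>
    intro p q r s p2 q2 r2 s2 h1 h2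
    obtain ⟨o1, o2⟩ := hd
    cases o1 with
    | none =>
      cases o2 with
      | none =>
        simp only [List.filterMap_cons] at h1 h2
        obtain ⟨m, hl, hch, hr1, hr2, hr3, hr4, hc1, hc2, hc3, hc4, hm, hs⟩ := ih p q r s p2 q2 r2 s2 h1 h2
        have e1 : nMatches ((none, none) :: tl) = nMatches tl := by simp [nMatches]
        have e2 : nSpaces ((none, none) :: tl) = nSpaces tl := by simp [nSpaces]
        exact ⟨m, hl, hch, hr1, hr2, hr3, hr4, hc1, hc2, hc3, hc4, by omega, by omega⟩
      | some d =>
        simp only [List.filterMap_cons] at h1 h2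
        have e1 : ∀ L, nMatches ((none, some d) :: L) = nMatches L := by intro L; simp [nMatches]
        have e2 : ∀ L, nSpaces ((none, some d) :: L) = nSpaces L + 1 := by intro L; simp [nSpaces]
        rcases YY_cons h2.symm with ⟨p2, rfl, rfl, hLY⟩ | ⟨rfl, q2, rfl, rfl, hLY⟩ | ⟨rfl, rfl, r2, rfl, rfl, hLY⟩ | ⟨rfl, rfl, rfl, s2, rfl, rfl, hLY⟩
        · obtain ⟨m, hl, hch, hr1, hr2, hr3, hr4, hc1, hc2, hc3, hc4, hm, hs⟩ := ih _ _ _ _ _ _ _ _ h1 hLY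
          refine ⟨m, ?_, hch, hr1, hr2, hr3, hr4, ?_, ?_, ?_, ?_, by rw [e1]; exact hm, by rw [e2]; omega⟩
          · rw [bx_eq1]
            exact low_mono (le_refl _) (bx_pos _ _ _ _) hl
          all_goals omega
        · obtain ⟨m, hl, hch, hr1, hr2, hr3, hr4, hc1, hc2, hc3, hc4, hm, hs⟩ := ih _ _ _ _ _ _ _ _ h1 hLY
          refine ⟨m, ?_, hch, hr1, hr2, hr3, hr4, ?_, ?_, ?_, ?_, by rw [e1]; exact hm, by rw [e2]; omega⟩
          · rw [bx_eq2]
            exact low_mono (le_refl _) (bx_ge2 _ _ _) hl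
          all_goals omega
        · obtain ⟨m, hl, hch, hr1, hr2, hr3, hr4, hc1, hc2, hc3, hc4, hm, hs⟩ := ih _ _ _ _ _ _ _ _ h1 hLY
          refine ⟨m, ?_, hch, hr1, hr2, hr3, hr4, ?_, ?_, ?_, ?_, by rw [e1]; exact hm, by rw [e2]; omega⟩
          · rw [bx_eq3]
            exact low_mono (le_refl _) (bx_ge3 _ _) hl
          all_goals omega
        · obtain ⟨m, hl, hch, hr1, hr2, hr3, hr4, hc1, hc2, hc3, hc4, hm, hs⟩ := ih _ _ _ _ _ _ _ _ h1 hLY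
          refine ⟨m, ?_, hch, hr1, hr2, hr3, hr4, ?_, ?_, ?_, ?_, by rw [e1]; exact hm, by rw [e2]; omega⟩
          · rw [bx_eq4]
            exact low_mono (le_refl _) (bx_ge4 _) hl
          all_goals omega
    | some c =>
      cases o2 with
      | none =>
        simp only [List.filterMap_cons] at h1 h2
        have e1 : ∀ L, nMatches ((some c, none) :: L) = nMatches L := by intro L; simp [nMatches]
        have e2 : ∀ L, nSpaces ((some c, none) :: L) = nSpaces L + 1 := by intro L; simp [nSpaces]
        rcases XX_cons h1.symm with ⟨p1, rfl, rfl, hLX⟩ | ⟨rfl, q1, rfl, rfl, hLX⟩ | ⟨rfl, rfl, r1, rfl, rfl, hLX⟩ | ⟨rfl, rfl, rfl, s1, rfl, rfl, hLX⟩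
        · obtain ⟨m, hl, hch, hr1, hr2, hr3, hr4, hc1, hc2, hc3, hc4, hm, hs⟩ := ih _ _ _ _ _ _ _ _ hLX h2
          refine ⟨m, ?_, hch, ?_, ?_, ?_, ?_, hc1, hc2, hc3, hc4, by rw [e1]; exact hm, by rw [e2]; omega⟩
          · rw [bx_eq1]
            exact low_mono (bx_pos _ _ _ _) (le_refl _) hl
          all_goals omega
        · obtain ⟨m, hl, hch, hr1, hr2, hr3, hr4, hc1, hc2, hc3, hc4, hm, hs⟩ := ih _ _ _ _ _ _ _ _ hLX h2
          refine ⟨m, ?_, hch, ?_, ?_, ?_, ?_, hc1, hc2, hc3, hc4, by rw [e1]; exact hm, by rw [e2]; omega⟩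
          · rw [bx_eq2]
            exact low_mono (bx_ge2 _ _ _) (le_refl _) hl
          all_goals omega
        · obtain ⟨m, hl, hch, hr1, hr2, hr3, hr4, hc1, hc2, hc3, hc4, hm, hs⟩ := ih _ _ _ _ _ _ _ _ hLX h2
          refine ⟨m, ?_, hch, ?_, ?_, ?_, ?_, hc1, hc2, hc3, hc4, by rw [e1]; exact hm, by rw [e2]; omega⟩
          · rw [bx_eq3]
            exact low_mono (bx_ge3 _ _) (le_refl _) hl
          all_goals omega
        · obtain ⟨m, hl, hch, hr1, hr2, hr3, hr4, hc1, hc2, hc3, hc4, hm, hs⟩ := ih _ _ _ _ _ _ _ _ hLX h2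
          refine ⟨m, ?_, hch, ?_, ?_, ?_, ?_, hc1, hc2, hc3, hc4, by rw [e1]; exact hm, by rw [e2]; omega⟩
          · rw [bx_eq4]
            exact low_mono (bx_ge4 _) (le_refl _) hl
          all_goals omega
      | some d =>
        simp only [List.filterMap_cons] at h1 h2
        rcases XX_cons h1.symm with ⟨p1, rfl, rfl, hLX⟩ | ⟨rfl, q1, rfl, rfl, hLX⟩ | ⟨rfl, rfl, r1, rfl, rfl, hLX⟩ | ⟨rfl, rfl, rfl, s1, rfl, rfl, hLX⟩ <;>
          rcases YY_cons h2.symm with ⟨p2, rfl, rfl, hLY⟩ | ⟨rfl, q2, rfl, rfl, hLY⟩ | ⟨rfl, rfl, r2, rfl, rfl, hLY⟩ | ⟨rfl, rfl, rfl, s2, rfl, rfl, hLY⟩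
        · obtain ⟨m, hl, hch, hr1, hr2, hr3, hr4, hc1, hc2, hc3, hc4, hm, hs⟩ := ih _ _ _ _ _ _ _ _ hLX hLY
          have hlow : low m 1 1 := low_mono (bx_pos _ _ _ _) (bx_pos _ _ _ _) hl
          have e1 : nMatches ((some false, some true) :: tl) = nMatches tl + 0 := by simp [nMatches]
          have e2 : nSpaces ((some false, some true) :: tl) = nSpaces tl := by simp [nSpaces]
          refine ⟨bump m 1 1, ?_, chain_bump hch hlow, ?_, ?_, ?_, ?_, ?_, ?_, ?_, ?_, ?_, ?_⟩
          · rw [bx_eq1, bx_eq1]; exact low_bump (by norm_num) (by norm_num) (by norm_num) (by norm_num) hlow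
          · rw [rsum_bump_same (by norm_num) (by norm_num)]; omega
          · rw [rsum_bump_ne 2 (by norm_num)]; omega
          · rw [rsum_bump_ne 3 (by norm_num)]; omega
          · rw [rsum_bump_ne 4 (by norm_num)]; omega
          · rw [csum_bump_same (by norm_num) (by norm_num)]; omega
          · rw [csum_bump_ne 2 (by norm_num)]; omega
          · rw [csum_bump_ne 3 (by norm_num)]; omega
          · rw [csum_bump_ne 4 (by norm_num)]; omega
          · rw [e1, osum_bump (by norm_num) (by norm_num) (by norm_num) (by norm_num)]; omega
          · rw [e2, tsum_bump (by norm_num) (by norm_num) (by norm_num) (by norm_num)]; omega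
        · obtain ⟨m, hl, hch, hr1, hr2, hr3, hr4, hc1, hc2, hc3, hc4, hm, hs⟩ := ih _ _ _ _ _ _ _ _ hLX hLY
          have hlow : low m 1 2 := low_mono (bx_pos _ _ _ _) (bx_ge2 _ _ _) hl
          have e1 : nMatches ((some false, some false) :: tl) = nMatches tl + 1 := by simp [nMatches]
          have e2 : nSpaces ((some false, some false) :: tl) = nSpaces tl := by simp [nSpaces]
          refine ⟨bump m 1 2, ?_, chain_bump hch hlow, ?_, ?_, ?_, ?_, ?_, ?_, ?_, ?_, ?_, ?_⟩
          · rw [bx_eq1, bx_eq2]; exact low_bump (by norm_num) (by norm_num) (by norm_num) (by norm_num) hlow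
          · rw [rsum_bump_same (by norm_num) (by norm_num)]; omega
          · rw [rsum_bump_ne 2 (by norm_num)]; omega
          · rw [rsum_bump_ne 3 (by norm_num)]; omega
          · rw [rsum_bump_ne 4 (by norm_num)]; omega
          · rw [csum_bump_ne 1 (by norm_num)]; omega
          · rw [csum_bump_same (by norm_num) (by norm_num)]; omega
          · rw [csum_bump_ne 3 (by norm_num)]; omega
          · rw [csum_bump_ne 4 (by norm_num)]; omega
          · rw [e1, osum_bump (by norm_num) (by norm_num) (by norm_num) (by norm_num)]; omega
          · rw [e2, tsum_bump (by norm_num) (by norm_num) (by norm_num) (by norm_num)]; omega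
        · obtain ⟨m, hl, hch, hr1, hr2, hr3, hr4, hc1, hc2, hc3, hc4, hm, hs⟩ := ih _ _ _ _ _ _ _ _ hLX hLY
          have hlow : low m 1 3 := low_mono (bx_pos _ _ _ _) (bx_ge3 _ _) hl
          have e1 : nMatches ((some false, some true) :: tl) = nMatches tl + 0 := by simp [nMatches]
          have e2 : nSpaces ((some false, some true) :: tl) = nSpaces tl := by simp [nSpaces]
          refine ⟨bump m 1 3, ?_, chain_bump hch hlow, ?_, ?_, ?_, ?_, ?_, ?_, ?_, ?_, ?_, ?_⟩
          · rw [bx_eq1, bx_eq3]; exact low_bump (by norm_num) (by norm_num) (by norm_num) (by norm_num) hlow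
          · rw [rsum_bump_same (by norm_num) (by norm_num)]; omega
          · rw [rsum_bump_ne 2 (by norm_num)]; omega
          · rw [rsum_bump_ne 3 (by norm_num)]; omega
          · rw [rsum_bump_ne 4 (by norm_num)]; omega
          · rw [csum_bump_ne 1 (by norm_num)]; omega
          · rw [csum_bump_ne 2 (by norm_num)]; omega
          · rw [csum_bump_same (by norm_num) (by norm_num)]; omega
          · rw [csum_bump_ne 4 (by norm_num)]; omega
          · rw [e1, osum_bump (by norm_num) (by norm_num) (by norm_num) (by norm_num)]; omega
          · rw [e2, tsum_bump (by norm_num) (by norm_num) (by norm_num) (by norm_num)]; omega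
        · obtain ⟨m, hl, hch, hr1, hr2, hr3, hr4, hc1, hc2, hc3, hc4, hm, hs⟩ := ih _ _ _ _ _ _ _ _ hLX hLY
          have hlow : low m 1 4 := low_mono (bx_pos _ _ _ _) (bx_ge4 _) hl
          have e1 : nMatches ((some false, some false) :: tl) = nMatches tl + 1 := by simp [nMatches]
          have e2 : nSpaces ((some false, some false) :: tl) = nSpaces tl := by simp [nSpaces]
          refine ⟨bump m 1 4, ?_, chain_bump hch hlow, ?_, ?_, ?_, ?_, ?_, ?_, ?_, ?_, ?_, ?_⟩
          · rw [bx_eq1, bx_eq4]; exact low_bump (by norm_num) (by norm_num) (by norm_num) (by norm_num) hlow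
          · rw [rsum_bump_same (by norm_num) (by norm_num)]; omega
          · rw [rsum_bump_ne 2 (by norm_num)]; omega
          · rw [rsum_bump_ne 3 (by norm_num)]; omega
          · rw [rsum_bump_ne 4 (by norm_num)]; omega
          · rw [csum_bump_ne 1 (by norm_num)]; omega
          · rw [csum_bump_ne 2 (by norm_num)]; omega
          · rw [csum_bump_ne 3 (by norm_num)]; omega
          · rw [csum_bump_same (by norm_num) (by norm_num)]; omega
          · rw [e1, osum_bump (by norm_num) (by norm_num) (by norm_num) (by norm_num)]; omega
          · rw [e2, tsum_bump (by norm_num) (by norm_num) (by norm_num) (by norm_num)]; omega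
        · obtain ⟨m, hl, hch, hr1, hr2, hr3, hr4, hc1, hc2, hc3, hc4, hm, hs⟩ := ih _ _ _ _ _ _ _ _ hLX hLY
          have hlow : low m 2 1 := low_mono (bx_ge2 _ _ _) (bx_pos _ _ _ _) hl
          have e1 : nMatches ((some true, some true) :: tl) = nMatches tl + 1 := by simp [nMatches]
          have e2 : nSpaces ((some true, some true) :: tl) = nSpaces tl := by simp [nSpaces]
          refine ⟨bump m 2 1, ?_, chain_bump hch hlow, ?_, ?_, ?_, ?_, ?_, ?_, ?_, ?_, ?_, ?_⟩
          · rw [bx_eq2, bx_eq1]; exact low_bump (by norm_num) (by norm_num) (by norm_num) (by norm_num) hlow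
          · rw [rsum_bump_ne 1 (by norm_num)]; omega
          · rw [rsum_bump_same (by norm_num) (by norm_num)]; omega
          · rw [rsum_bump_ne 3 (by norm_num)]; omega
          · rw [rsum_bump_ne 4 (by norm_num)]; omega
          · rw [csum_bump_same (by norm_num) (by norm_num)]; omega
          · rw [csum_bump_ne 2 (by norm_num)]; omega
          · rw [csum_bump_ne 3 (by norm_num)]; omega
          · rw [csum_bump_ne 4 (by norm_num)]; omega
          · rw [e1, osum_bump (by norm_num) (by norm_num) (by norm_num) (by norm_num)]; omega
          · rw [e2, tsum_bump (by norm_num) (by norm_num) (by norm_num) (by norm_num)]; omega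
        · obtain ⟨m, hl, hch, hr1, hr2, hr3, hr4, hc1, hc2, hc3, hc4, hm, hs⟩ := ih _ _ _ _ _ _ _ _ hLX hLY
          have hlow : low m 2 2 := low_mono (bx_ge2 _ _ _) (bx_ge2 _ _ _) hl
          have e1 : nMatches ((some true, some false) :: tl) = nMatches tl + 0 := by simp [nMatches]
          have e2 : nSpaces ((some true, some false) :: tl) = nSpaces tl := by simp [nSpaces]
          refine ⟨bump m 2 2, ?_, chain_bump hch hlow, ?_, ?_, ?_, ?_, ?_, ?_, ?_, ?_, ?_, ?_⟩
          · rw [bx_eq2, bx_eq2]; exact low_bump (by norm_num) (by norm_num) (by norm_num) (by norm_num) hlow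
          · rw [rsum_bump_ne 1 (by norm_num)]; omega
          · rw [rsum_bump_same (by norm_num) (by norm_num)]; omega
          · rw [rsum_bump_ne 3 (by norm_num)]; omega
          · rw [rsum_bump_ne 4 (by norm_num)]; omega
          · rw [csum_bump_ne 1 (by norm_num)]; omega
          · rw [csum_bump_same (by norm_num) (by norm_num)]; omega
          · rw [csum_bump_ne 3 (by norm_num)]; omega
          · rw [csum_bump_ne 4 (by norm_num)]; omega
          · rw [e1, osum_bump (by norm_num) (by norm_num) (by norm_num) (by norm_num)]; omega
          · rw [e2, tsum_bump (by norm_num) (by norm_num) (by norm_num) (by norm_num)]; omega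
        · obtain ⟨m, hl, hch, hr1, hr2, hr3, hr4, hc1, hc2, hc3, hc4, hm, hs⟩ := ih _ _ _ _ _ _ _ _ hLX hLY
          have hlow : low m 2 3 := low_mono (bx_ge2 _ _ _) (bx_ge3 _ _) hl
          have e1 : nMatches ((some true, some true) :: tl) = nMatches tl + 1 := by simp [nMatches]
          have e2 : nSpaces ((some true, some true) :: tl) = nSpaces tl := by simp [nSpaces]
          refine ⟨bump m 2 3, ?_, chain_bump hch hlow, ?_, ?_, ?_, ?_, ?_, ?_, ?_, ?_, ?_, ?_⟩
          · rw [bx_eq2, bx_eq3]; exact low_bump (by norm_num) (by norm_num) (by norm_num) (by norm_num) hlow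
          · rw [rsum_bump_ne 1 (by norm_num)]; omega
          · rw [rsum_bump_same (by norm_num) (by norm_num)]; omega
          · rw [rsum_bump_ne 3 (by norm_num)]; omega
          · rw [rsum_bump_ne 4 (by norm_num)]; omega
          · rw [csum_bump_ne 1 (by norm_num)]; omega
          · rw [csum_bump_ne 2 (by norm_num)]; omega
          · rw [csum_bump_same (by norm_num) (by norm_num)]; omega
          · rw [csum_bump_ne 4 (by norm_num)]; omega
          · rw [e1, osum_bump (by norm_num) (by norm_num) (by norm_num) (by norm_num)]; omega
          · rw [e2, tsum_bump (by norm_num) (by norm_num) (by norm_num) (by norm_num)]; omega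
        · obtain ⟨m, hl, hch, hr1, hr2, hr3, hr4, hc1, hc2, hc3, hc4, hm, hs⟩ := ih _ _ _ _ _ _ _ _ hLX hLY
          have hlow : low m 2 4 := low_mono (bx_ge2 _ _ _) (bx_ge4 _) hl
          have e1 : nMatches ((some true, some false) :: tl) = nMatches tl + 0 := by simp [nMatches]
          have e2 : nSpaces ((some true, some false) :: tl) = nSpaces tl := by simp [nSpaces]
          refine ⟨bump m 2 4, ?_, chain_bump hch hlow, ?_, ?_, ?_, ?_, ?_, ?_, ?_, ?_, ?_, ?_⟩
          · rw [bx_eq2, bx_eq4]; exact low_bump (by norm_num) (by norm_num) (by norm_num) (by norm_num) hlow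
          · rw [rsum_bump_ne 1 (by norm_num)]; omega
          · rw [rsum_bump_same (by norm_num) (by norm_num)]; omega
          · rw [rsum_bump_ne 3 (by norm_num)]; omega
          · rw [rsum_bump_ne 4 (by norm_num)]; omega
          · rw [csum_bump_ne 1 (by norm_num)]; omega
          · rw [csum_bump_ne 2 (by norm_num)]; omega
          · rw [csum_bump_ne 3 (by norm_num)]; omega
          · rw [csum_bump_same (by norm_num) (by norm_num)]; omega
          · rw [e1, osum_bump (by norm_num) (by norm_num) (by norm_num) (by norm_num)]; omega
          · rw [e2, tsum_bump (by norm_num) (by norm_num) (by norm_num) (by norm_num)]; omega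
        · obtain ⟨m, hl, hch, hr1, hr2, hr3, hr4, hc1, hc2, hc3, hc4, hm, hs⟩ := ih _ _ _ _ _ _ _ _ hLX hLY
          have hlow : low m 3 1 := low_mono (bx_ge3 _ _) (bx_pos _ _ _ _) hl
          have e1 : nMatches ((some false, some true) :: tl) = nMatches tl + 0 := by simp [nMatches]
          have e2 : nSpaces ((some false, some true) :: tl) = nSpaces tl := by simp [nSpaces]
          refine ⟨bump m 3 1, ?_, chain_bump hch hlow, ?_, ?_, ?_, ?_, ?_, ?_, ?_, ?_, ?_, ?_⟩
          · rw [bx_eq3, bx_eq1]; exact low_bump (by norm_num) (by norm_num) (by norm_num) (by norm_num) hlow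
          · rw [rsum_bump_ne 1 (by norm_num)]; omega
          · rw [rsum_bump_ne 2 (by norm_num)]; omega
          · rw [rsum_bump_same (by norm_num) (by norm_num)]; omega
          · rw [rsum_bump_ne 4 (by norm_num)]; omega
          · rw [csum_bump_same (by norm_num) (by norm_num)]; omega
          · rw [csum_bump_ne 2 (by norm_num)]; omega
          · rw [csum_bump_ne 3 (by norm_num)]; omega
          · rw [csum_bump_ne 4 (by norm_num)]; omega
          · rw [e1, osum_bump (by norm_num) (by norm_num) (by norm_num) (by norm_num)]; omega
          · rw [e2, tsum_bump (by norm_num) (by norm_num) (by norm_num) (by norm_num)]; omega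
        · obtain ⟨m, hl, hch, hr1, hr2, hr3, hr4, hc1, hc2, hc3, hc4, hm, hs⟩ := ih _ _ _ _ _ _ _ _ hLX hLY
          have hlow : low m 3 2 := low_mono (bx_ge3 _ _) (bx_ge2 _ _ _) hl
          have e1 : nMatches ((some false, some false) :: tl) = nMatches tl + 1 := by simp [nMatches]
          have e2 : nSpaces ((some false, some false) :: tl) = nSpaces tl := by simp [nSpaces]
          refine ⟨bump m 3 2, ?_, chain_bump hch hlow, ?_, ?_, ?_, ?_, ?_, ?_, ?_, ?_, ?_, ?_⟩
          · rw [bx_eq3, bx_eq2]; exact low_bump (by norm_num) (by norm_num) (by norm_num) (by norm_num) hlow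
          · rw [rsum_bump_ne 1 (by norm_num)]; omega
          · rw [rsum_bump_ne 2 (by norm_num)]; omega
          · rw [rsum_bump_same (by norm_num) (by norm_num)]; omega
          · rw [rsum_bump_ne 4 (by norm_num)]; omega
          · rw [csum_bump_ne 1 (by norm_num)]; omega
          · rw [csum_bump_same (by norm_num) (by norm_num)]; omega
          · rw [csum_bump_ne 3 (by norm_num)]; omega
          · rw [csum_bump_ne 4 (by norm_num)]; omega
          · rw [e1, osum_bump (by norm_num) (by norm_num) (by norm_num) (by norm_num)]; omega
          · rw [e2, tsum_bump (by norm_num) (by norm_num) (by norm_num) (by norm_num)]; omega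
        · obtain ⟨m, hl, hch, hr1, hr2, hr3, hr4, hc1, hc2, hc3, hc4, hm, hs⟩ := ih _ _ _ _ _ _ _ _ hLX hLY
          have hlow : low m 3 3 := low_mono (bx_ge3 _ _) (bx_ge3 _ _) hl
          have e1 : nMatches ((some false, some true) :: tl) = nMatches tl + 0 := by simp [nMatches]
          have e2 : nSpaces ((some false, some true) :: tl) = nSpaces tl := by simp [nSpaces]
          refine ⟨bump m 3 3, ?_, chain_bump hch hlow, ?_, ?_, ?_, ?_, ?_, ?_, ?_, ?_, ?_, ?_⟩
          · rw [bx_eq3, bx_eq3]; exact low_bump (by norm_num) (by norm_num) (by norm_num) (by norm_num) hlow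
          · rw [rsum_bump_ne 1 (by norm_num)]; omega
          · rw [rsum_bump_ne 2 (by norm_num)]; omega
          · rw [rsum_bump_same (by norm_num) (by norm_num)]; omega
          · rw [rsum_bump_ne 4 (by norm_num)]; omega
          · rw [csum_bump_ne 1 (by norm_num)]; omega
          · rw [csum_bump_ne 2 (by norm_num)]; omega
          · rw [csum_bump_same (by norm_num) (by norm_num)]; omega
          · rw [csum_bump_ne 4 (by norm_num)]; omega
          · rw [e1, osum_bump (by norm_num) (by norm_num) (by norm_num) (by norm_num)]; omega
          · rw [e2, tsum_bump (by norm_num) (by norm_num) (by norm_num) (by norm_num)]; omega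
        · obtain ⟨m, hl, hch, hr1, hr2, hr3, hr4, hc1, hc2, hc3, hc4, hm, hs⟩ := ih _ _ _ _ _ _ _ _ hLX hLY
          have hlow : low m 3 4 := low_mono (bx_ge3 _ _) (bx_ge4 _) hl
          have e1 : nMatches ((some false, some false) :: tl) = nMatches tl + 1 := by simp [nMatches]
          have e2 : nSpaces ((some false, some false) :: tl) = nSpaces tl := by simp [nSpaces]
          refine ⟨bump m 3 4, ?_, chain_bump hch hlow, ?_, ?_, ?_, ?_, ?_, ?_, ?_, ?_, ?_, ?_⟩
          · rw [bx_eq3, bx_eq4]; exact low_bump (by norm_num) (by norm_num) (by norm_num) (by norm_num) hlow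
          · rw [rsum_bump_ne 1 (by norm_num)]; omega
          · rw [rsum_bump_ne 2 (by norm_num)]; omega
          · rw [rsum_bump_same (by norm_num) (by norm_num)]; omega
          · rw [rsum_bump_ne 4 (by norm_num)]; omega
          · rw [csum_bump_ne 1 (by norm_num)]; omega
          · rw [csum_bump_ne 2 (by norm_num)]; omega
          · rw [csum_bump_ne 3 (by norm_num)]; omega
          · rw [csum_bump_same (by norm_num) (by norm_num)]; omega
          · rw [e1, osum_bump (by norm_num) (by norm_num) (by norm_num) (by norm_num)]; omega
          · rw [e2, tsum_bump (by norm_num) (by norm_num) (by norm_num) (by norm_num)]; omega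
        · obtain ⟨m, hl, hch, hr1, hr2, hr3, hr4, hc1, hc2, hc3, hc4, hm, hs⟩ := ih _ _ _ _ _ _ _ _ hLX hLY
          have hlow : low m 4 1 := low_mono (bx_ge4 _) (bx_pos _ _ _ _) hl
          have e1 : nMatches ((some true, some true) :: tl) = nMatches tl + 1 := by simp [nMatches]
          have e2 : nSpaces ((some true, some true) :: tl) = nSpaces tl := by simp [nSpaces]
          refine ⟨bump m 4 1, ?_, chain_bump hch hlow, ?_, ?_, ?_, ?_, ?_, ?_, ?_, ?_, ?_, ?_⟩
          · rw [bx_eq4, bx_eq1]; exact low_bump (by norm_num) (by norm_num) (by norm_num) (by norm_num) hlow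
          · rw [rsum_bump_ne 1 (by norm_num)]; omega
          · rw [rsum_bump_ne 2 (by norm_num)]; omega
          · rw [rsum_bump_ne 3 (by norm_num)]; omega
          · rw [rsum_bump_same (by norm_num) (by norm_num)]; omega
          · rw [csum_bump_same (by norm_num) (by norm_num)]; omega
          · rw [csum_bump_ne 2 (by norm_num)]; omega
          · rw [csum_bump_ne 3 (by norm_num)]; omega
          · rw [csum_bump_ne 4 (by norm_num)]; omega
          · rw [e1, osum_bump (by norm_num) (by norm_num) (by norm_num) (by norm_num)]; omega
          · rw [e2, tsum_bump (by norm_num) (by norm_num) (by norm_num) (by norm_num)]; omega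
        · obtain ⟨m, hl, hch, hr1, hr2, hr3, hr4, hc1, hc2, hc3, hc4, hm, hs⟩ := ih _ _ _ _ _ _ _ _ hLX hLY
          have hlow : low m 4 2 := low_mono (bx_ge4 _) (bx_ge2 _ _ _) hl
          have e1 : nMatches ((some true, some false) :: tl) = nMatches tl + 0 := by simp [nMatches]
          have e2 : nSpaces ((some true, some false) :: tl) = nSpaces tl := by simp [nSpaces]
          refine ⟨bump m 4 2, ?_, chain_bump hch hlow, ?_, ?_, ?_, ?_, ?_, ?_, ?_, ?_, ?_, ?_⟩
          · rw [bx_eq4, bx_eq2]; exact low_bump (by norm_num) (by norm_num) (by norm_num) (by norm_num) hlow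
          · rw [rsum_bump_ne 1 (by norm_num)]; omega
          · rw [rsum_bump_ne 2 (by norm_num)]; omega
          · rw [rsum_bump_ne 3 (by norm_num)]; omega
          · rw [rsum_bump_same (by norm_num) (by norm_num)]; omega
          · rw [csum_bump_ne 1 (by norm_num)]; omega
          · rw [csum_bump_same (by norm_num) (by norm_num)]; omega
          · rw [csum_bump_ne 3 (by norm_num)]; omega
          · rw [csum_bump_ne 4 (by norm_num)]; omega
          · rw [e1, osum_bump (by norm_num) (by norm_num) (by norm_num) (by norm_num)]; omega
          · rw [e2, tsum_bump (by norm_num) (by norm_num) (by norm_num) (by norm_num)]; omega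
        · obtain ⟨m, hl, hch, hr1, hr2, hr3, hr4, hc1, hc2, hc3, hc4, hm, hs⟩ := ih _ _ _ _ _ _ _ _ hLX hLY
          have hlow : low m 4 3 := low_mono (bx_ge4 _) (bx_ge3 _ _) hl
          have e1 : nMatches ((some true, some true) :: tl) = nMatches tl + 1 := by simp [nMatches]
          have e2 : nSpaces ((some true, some true) :: tl) = nSpaces tl := by simp [nSpaces]
          refine ⟨bump m 4 3, ?_, chain_bump hch hlow, ?_, ?_, ?_, ?_, ?_, ?_, ?_, ?_, ?_, ?_⟩
          · rw [bx_eq4, bx_eq3]; exact low_bump (by norm_num) (by norm_num) (by norm_num) (by norm_num) hlow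
          · rw [rsum_bump_ne 1 (by norm_num)]; omega
          · rw [rsum_bump_ne 2 (by norm_num)]; omega
          · rw [rsum_bump_ne 3 (by norm_num)]; omega
          · rw [rsum_bump_same (by norm_num) (by norm_num)]; omega
          · rw [csum_bump_ne 1 (by norm_num)]; omega
          · rw [csum_bump_ne 2 (by norm_num)]; omega
          · rw [csum_bump_same (by norm_num) (by norm_num)]; omega
          · rw [csum_bump_ne 4 (by norm_num)]; omega
          · rw [e1, osum_bump (by norm_num) (by norm_num) (by norm_num) (by norm_num)]; omega
          · rw [e2, tsum_bump (by norm_num) (by norm_num) (by norm_num) (by norm_num)]; omega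
        · obtain ⟨m, hl, hch, hr1, hr2, hr3, hr4, hc1, hc2, hc3, hc4, hm, hs⟩ := ih _ _ _ _ _ _ _ _ hLX hLY
          have hlow : low m 4 4 := low_mono (bx_ge4 _) (bx_ge4 _) hl
          have e1 : nMatches ((some true, some false) :: tl) = nMatches tl + 0 := by simp [nMatches]
          have e2 : nSpaces ((some true, some false) :: tl) = nSpaces tl := by simp [nSpaces]
          refine ⟨bump m 4 4, ?_, chain_bump hch hlow, ?_, ?_, ?_, ?_, ?_, ?_, ?_, ?_, ?_, ?_⟩
          · rw [bx_eq4, bx_eq4]; exact low_bump (by norm_num) (by norm_num) (by norm_num) (by norm_num) hlow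
          · rw [rsum_bump_ne 1 (by norm_num)]; omega
          · rw [rsum_bump_ne 2 (by norm_num)]; omega
          · rw [rsum_bump_ne 3 (by norm_num)]; omega
          · rw [rsum_bump_same (by norm_num) (by norm_num)]; omega
          · rw [csum_bump_ne 1 (by norm_num)]; omega
          · rw [csum_bump_ne 2 (by norm_num)]; omega
          · rw [csum_bump_ne 3 (by norm_num)]; omega
          · rw [csum_bump_same (by norm_num) (by norm_num)]; omega
          · rw [e1, osum_bump (by norm_num) (by norm_num) (by norm_num) (by norm_num)]; omega
          · rw [e2, tsum_bump (by norm_num) (by norm_num) (by norm_num) (by norm_num)]; omega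

end AlnAux


namespace AlnAux

def Al1 (u b : ℕ) : List (Option Bool × Option Bool) :=
  List.replicate b (some false, none) ++ List.replicate (2*u+b) (some false, some true) ++
  List.replicate b (some true, some true) ++ List.replicate b (some false, some false) ++
  List.replicate b (some true, some true) ++ List.replicate (2*u+b) (some true, some false) ++
  List.replicate b (none, some false)

def Al2 (u b : ℕ) : List (Option Bool × Option Bool) :=
  List.replicate (2*u+2*b) (none, some true) ++ List.replicate b (some false, some false) ++
  List.replicate b (none, some true) ++ List.replicate (2*u+b) (some false, some false) ++
  List.replicate b (some true, none) ++ List.replicate b (some false, some false) ++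
  List.replicate (2*u+2*b) (some true, none)

lemma fmf_rep (n : ℕ) (c : Bool) (o : Option Bool) :
    (List.replicate n (some c, o)).filterMap Prod.fst = List.replicate n c := by
  induction n with
  | zero => simp
  | succ k ih => simp [List.replicate_succ, ih]

lemma fmf_rep_none (n : ℕ) (o : Option Bool) :
    (List.replicate n ((none : Option Bool), o)).filterMap Prod.fst = [] := by
  induction n with
  | zero => simp
  | succ k ih => simp [List.replicate_succ, ih]

lemma fms_rep (n : ℕ) (o : Option Bool) (c : Bool) :
    (List.replicate n (o, some c)).filterMap Prod.snd = List.replicate n c := by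
  induction n with
  | zero => simp
  | succ k ih => simp [List.replicate_succ, ih]

lemma fms_rep_none (n : ℕ) (o : Option Bool) :
    (List.replicate n (o, (none : Option Bool))).filterMap Prod.snd = [] := by
  induction n with
  | zero => simp
  | succ k ih => simp [List.replicate_succ, ih]

lemma filt_rep (n : ℕ) (x : Option Bool × Option Bool) (p : Option Bool × Option Bool → Bool) :
    (List.replicate n x).filter p = if p x then List.replicate n x else [] := by
  induction n with
  | zero => simp
  | succ k ih => by_cases h : p x <;> simp [List.replicate_succ, ih, h]

lemma Al1_fst (u b : ℕ) : (Al1 u b).filterMap Prod.fst = XX (2*u+2*b) b b (2*u+2*b) := by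
  simp only [Al1, XX, List.filterMap_append, fmf_rep, fmf_rep_none]
  rw [show 2*u+2*b = b + (2*u+b) by ring, List.replicate_add, List.replicate_add]
  simp [List.append_assoc]

lemma Al1_snd (u b : ℕ) : (Al1 u b).filterMap Prod.snd = YY (2*u+2*b) b b (2*u+2*b) := by
  simp only [Al1, YY, List.filterMap_append, fms_rep, fms_rep_none]
  rw [show 2*u+2*b = (2*u+b) + b by ring, List.replicate_add, List.replicate_add]
  simp [List.append_assoc]

lemma Al1_nomem (u b : ℕ) : ((none : Option Bool), (none : Option Bool)) ∉ Al1 u b := by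
  intro h
  simp [Al1, List.mem_append, List.mem_replicate] at h

lemma Al1_nSpaces (u b : ℕ) : nSpaces (Al1 u b) = 2*b := by
  simp [nSpaces, Al1, List.filter_append, filt_rep]
  omega

lemma Al1_nMatches (u b : ℕ) : nMatches (Al1 u b) = 3*b := by
  simp [nMatches, Al1, List.filter_append, filt_rep]
  omega

lemma Al2_fst (u b : ℕ) : (Al2 u b).filterMap Prod.fst = XX (2*u+2*b) b b (2*u+2*b) := by
  simp only [Al2, XX, List.filterMap_append, fmf_rep, fmf_rep_none]
  rw [show 2*u+2*b = b + (2*u+b) by ring, List.replicate_add]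
  simp [List.append_assoc]

lemma Al2_snd (u b : ℕ) : (Al2 u b).filterMap Prod.snd = YY (2*u+2*b) b b (2*u+2*b) := by
  simp only [Al2, YY, List.filterMap_append, fms_rep, fms_rep_none]
  rw [show 2*u+2*b = (2*u+b) + b by ring, List.replicate_add]
  simp [List.append_assoc]

lemma Al2_nomem (u b : ℕ) : ((none : Option Bool), (none : Option Bool)) ∉ Al2 u b := by
  intro h
  simp [Al2, List.mem_append, List.mem_replicate] at h

lemma Al2_nSpaces (u b : ℕ) : nSpaces (Al2 u b) = 2*(2*u+3*b) := by
  simp [nSpaces, Al2, List.filter_append, filt_rep]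
  omega

lemma Al2_nMatches (u b : ℕ) : nMatches (Al2 u b) = 2*u+3*b := by
  simp [nMatches, Al2, List.filter_append, filt_rep]
  omega

end AlnAux

namespace AlnAux
set_option maxHeartbeats 2000000
-- auto-generated static lemmas
theorem static_H3 (b c : ℕ) (m : ℕ → ℕ → ℕ)
    (hr1 : m 1 1 + m 1 2 + m 1 3 + m 1 4 ≤ 2*b+2*c)
    (hr2 : m 2 1 + m 2 2 + m 2 3 + m 2 4 ≤ b)
    (hr3 : m 3 1 + m 3 2 + m 3 3 + m 3 4 ≤ b)
    (hr4 : m 4 1 + m 4 2 + m 4 3 + m 4 4 ≤ 2*b+2*c)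
    (hc1 : m 1 1 + m 2 1 + m 3 1 + m 4 1 ≤ 2*b+2*c)
    (hc2 : m 1 2 + m 2 2 + m 3 2 + m 4 2 ≤ b)
    (hc3 : m 1 3 + m 2 3 + m 3 3 + m 4 3 ≤ b)
    (hc4 : m 1 4 + m 2 4 + m 3 4 + m 4 4 ≤ 2*b+2*c)
    (hcomp : ∀ x y x' y', x < x' → y' < y → m x y = 0 ∨ m x' y' = 0) :
    (b+c) * (m 1 2 + m 1 4 + m 2 1 + m 2 3 + m 3 2 + m 3 4 + m 4 1 + m 4 3)
      + c * (m 1 1 + m 1 2 + m 1 3 + m 1 4 + m 2 1 + m 2 2 + m 2 3 + m 2 4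
           + m 3 1 + m 3 2 + m 3 3 + m 3 4 + m 4 1 + m 4 2 + m 4 3 + m 4 4)
      ≤ (b+2*c) * (3*b+2*c) := by

  rcases hcomp 1 4 4 1 (by norm_num) (by norm_num) with hz0|hz0
  · -- (1, 4) = 0
    rcases hcomp 1 2 4 1 (by norm_num) (by norm_num) with hz1|hz1
    · -- (1, 2) = 0
      rcases hcomp 1 3 4 1 (by norm_num) (by norm_num) with hz2|hz2
      · -- (1, 3) = 0
        rcases hcomp 2 2 4 1 (by norm_num) (by norm_num) with hz3|hz3
        · -- (2, 2) = 0
          rcases hcomp 2 3 4 1 (by norm_num) (by norm_num) with hz4|hz4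
          · -- (2, 3) = 0
            rcases hcomp 2 4 4 1 (by norm_num) (by norm_num) with hz5|hz5
            · -- (2, 4) = 0
              rcases hcomp 3 2 4 1 (by norm_num) (by norm_num) with hz6|hz6
              · -- (3, 2) = 0
                rcases hcomp 3 4 4 1 (by norm_num) (by norm_num) with hz7|hz7
                · -- (3, 4) = 0
                    simp only [hz0, hz1, hz2, hz3, hz4, hz5, hz6, hz7, add_zero, zero_add] at *
                    nlinarith [mul_le_mul_right hr2 c, mul_le_mul_right hr4 c, mul_le_mul_right hc1 b, mul_le_mul_right hc1 c, mul_le_mul_right hc3 b, mul_le_mul_right hc3 c]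
                · -- (4, 1) = 0
                    simp only [hz0, hz1, hz2, hz3, hz4, hz5, hz6, hz7, add_zero, zero_add] at *
                    nlinarith [mul_le_mul_right hr2 b, mul_le_mul_right hr2 c, mul_le_mul_right hr3 b, mul_le_mul_right hr3 c, mul_le_mul_right hr4 c, mul_le_mul_right hc1 c, mul_le_mul_right hc3 b, mul_le_mul_right hc3 c]
              · -- (4, 1) = 0
                  simp only [hz0, hz1, hz2, hz3, hz4, hz5, hz6, add_zero, zero_add] at *
                  nlinarith [mul_le_mul_right hr2 b, mul_le_mul_right hr2 c, mul_le_mul_right hr3 b, mul_le_mul_right hr3 c, mul_le_mul_right hr4 c, mul_le_mul_right hc1 c, mul_le_mul_right hc3 b, mul_le_mul_right hc3 c]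
            · -- (4, 1) = 0
                simp only [hz0, hz1, hz2, hz3, hz4, hz5, add_zero, zero_add] at *
                nlinarith [mul_le_mul_right hr2 b, mul_le_mul_right hr2 c, mul_le_mul_right hr3 b, mul_le_mul_right hr3 c, mul_le_mul_right hr4 c, mul_le_mul_right hc1 c, mul_le_mul_right hc3 b, mul_le_mul_right hc3 c]
          · -- (4, 1) = 0
              simp only [hz0, hz1, hz2, hz3, hz4, add_zero, zero_add] at *
              nlinarith [mul_le_mul_right hr2 b, mul_le_mul_right hr2 c, mul_le_mul_right hr3 b, mul_le_mul_right hr3 c, mul_le_mul_right hr4 c, mul_le_mul_right hc1 c, mul_le_mul_right hc3 b, mul_le_mul_right hc3 c]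
        · -- (4, 1) = 0
            simp only [hz0, hz1, hz2, hz3, add_zero, zero_add] at *
            nlinarith [mul_le_mul_right hr2 b, mul_le_mul_right hr2 c, mul_le_mul_right hr3 b, mul_le_mul_right hr3 c, mul_le_mul_right hr4 c, mul_le_mul_right hc1 c, mul_le_mul_right hc3 b, mul_le_mul_right hc3 c]
      · -- (4, 1) = 0
          simp only [hz0, hz1, hz2, add_zero, zero_add] at *
          nlinarith [mul_le_mul_right hr2 b, mul_le_mul_right hr2 c, mul_le_mul_right hr3 b, mul_le_mul_right hr3 c, mul_le_mul_right hr4 c, mul_le_mul_right hc1 c, mul_le_mul_right hc3 b, mul_le_mul_right hc3 c]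
    · -- (4, 1) = 0
      rcases hcomp 1 2 2 1 (by norm_num) (by norm_num) with hz2|hz2
      · -- (1, 2) = 0
          simp only [hz0, hz1, hz2, add_zero, zero_add] at *
          nlinarith [mul_le_mul_right hr2 b, mul_le_mul_right hr2 c, mul_le_mul_right hr3 b, mul_le_mul_right hr3 c, mul_le_mul_right hr4 c, mul_le_mul_right hc1 c, mul_le_mul_right hc3 b, mul_le_mul_right hc3 c]
      · -- (2, 1) = 0
          simp only [hz0, hz1, hz2, add_zero, zero_add] at *
          nlinarith [mul_le_mul_right hr1 c, mul_le_mul_right hr3 b, mul_le_mul_right hr3 c, mul_le_mul_right hc2 b, mul_le_mul_right hc2 c, mul_le_mul_right hc3 b, mul_le_mul_right hc3 c, mul_le_mul_right hc4 c]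
  · -- (4, 1) = 0
    rcases hcomp 1 4 2 1 (by norm_num) (by norm_num) with hz1|hz1
    · -- (1, 4) = 0
      rcases hcomp 1 2 2 1 (by norm_num) (by norm_num) with hz2|hz2
      · -- (1, 2) = 0
          simp only [hz0, hz1, hz2, add_zero, zero_add] at *
          nlinarith [mul_le_mul_right hr2 b, mul_le_mul_right hr2 c, mul_le_mul_right hr3 b, mul_le_mul_right hr3 c, mul_le_mul_right hr4 c, mul_le_mul_right hc1 c, mul_le_mul_right hc3 b, mul_le_mul_right hc3 c]
      · -- (2, 1) = 0
          simp only [hz0, hz1, hz2, add_zero, zero_add] at *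
          nlinarith [mul_le_mul_right hr1 c, mul_le_mul_right hr3 b, mul_le_mul_right hr3 c, mul_le_mul_right hc2 b, mul_le_mul_right hc2 c, mul_le_mul_right hc3 b, mul_le_mul_right hc3 c, mul_le_mul_right hc4 c]
    · -- (2, 1) = 0
      rcases hcomp 1 4 2 2 (by norm_num) (by norm_num) with hz2|hz2
      · -- (1, 4) = 0
          simp only [hz0, hz1, hz2, add_zero, zero_add] at *
          nlinarith [mul_le_mul_right hr1 c, mul_le_mul_right hr3 b, mul_le_mul_right hr3 c, mul_le_mul_right hc2 b, mul_le_mul_right hc2 c, mul_le_mul_right hc3 b, mul_le_mul_right hc3 c, mul_le_mul_right hc4 c]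
      · -- (2, 2) = 0
        rcases hcomp 1 4 2 3 (by norm_num) (by norm_num) with hz3|hz3
        · -- (1, 4) = 0
            simp only [hz0, hz1, hz2, hz3, add_zero, zero_add] at *
            nlinarith [mul_le_mul_right hr1 c, mul_le_mul_right hr3 b, mul_le_mul_right hr3 c, mul_le_mul_right hc2 b, mul_le_mul_right hc2 c, mul_le_mul_right hc3 b, mul_le_mul_right hc3 c, mul_le_mul_right hc4 c]
        · -- (2, 3) = 0
          rcases hcomp 1 4 4 3 (by norm_num) (by norm_num) with hz4|hz4
          · -- (1, 4) = 0
              simp only [hz0, hz1, hz2, hz3, hz4, add_zero, zero_add] at *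
              nlinarith [mul_le_mul_right hr1 c, mul_le_mul_right hr3 b, mul_le_mul_right hr3 c, mul_le_mul_right hc2 b, mul_le_mul_right hc2 c, mul_le_mul_right hc3 b, mul_le_mul_right hc3 c, mul_le_mul_right hc4 c]
          · -- (4, 3) = 0
              simp only [hz0, hz1, hz2, hz3, hz4, add_zero, zero_add] at *
              nlinarith [mul_le_mul_right hr1 c, mul_le_mul_right hr3 c, mul_le_mul_right hc2 b, mul_le_mul_right hc2 c, mul_le_mul_right hc4 b, mul_le_mul_right hc4 c]

theorem static_lin (b c : ℕ) (m : ℕ → ℕ → ℕ)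
    (hr1 : m 1 1 + m 1 2 + m 1 3 + m 1 4 ≤ 2*b+2*c)
    (hr2 : m 2 1 + m 2 2 + m 2 3 + m 2 4 ≤ b)
    (hr3 : m 3 1 + m 3 2 + m 3 3 + m 3 4 ≤ b)
    (hr4 : m 4 1 + m 4 2 + m 4 3 + m 4 4 ≤ 2*b+2*c)
    (hc1 : m 1 1 + m 2 1 + m 3 1 + m 4 1 ≤ 2*b+2*c)
    (hc2 : m 1 2 + m 2 2 + m 3 2 + m 4 2 ≤ b)
    (hc3 : m 1 3 + m 2 3 + m 3 3 + m 4 3 ≤ b)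
    (hc4 : m 1 4 + m 2 4 + m 3 4 + m 4 4 ≤ 2*b+2*c)
    (hcomp : ∀ x y x' y', x < x' → y' < y → m x y = 0 ∨ m x' y' = 0) :
    (m 1 2 + m 1 4 + m 2 1 + m 2 3 + m 3 2 + m 3 4 + m 4 1 + m 4 3) ≤ 3*b+2*c
    ∧ (m 1 2 + m 1 4 + m 2 1 + m 2 3 + m 3 2 + m 3 4 + m 4 1 + m 4 3)
      + (m 1 1 + m 1 2 + m 1 3 + m 1 4 + m 2 1 + m 2 2 + m 2 3 + m 2 4
           + m 3 1 + m 3 2 + m 3 3 + m 3 4 + m 4 1 + m 4 2 + m 4 3 + m 4 4)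
      ≤ 8*b+4*c := by

  rcases hcomp 1 4 4 1 (by norm_num) (by norm_num) with hz0|hz0
  · -- (1, 4) = 0
    rcases hcomp 1 2 4 1 (by norm_num) (by norm_num) with hz1|hz1
    · -- (1, 2) = 0
      rcases hcomp 1 3 4 1 (by norm_num) (by norm_num) with hz2|hz2
      · -- (1, 3) = 0
        rcases hcomp 2 2 4 1 (by norm_num) (by norm_num) with hz3|hz3
        · -- (2, 2) = 0
          rcases hcomp 2 3 4 1 (by norm_num) (by norm_num) with hz4|hz4
          · -- (2, 3) = 0
            rcases hcomp 2 4 4 1 (by norm_num) (by norm_num) with hz5|hz5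
            · -- (2, 4) = 0
              rcases hcomp 3 2 4 1 (by norm_num) (by norm_num) with hz6|hz6
              · -- (3, 2) = 0
                rcases hcomp 3 4 4 1 (by norm_num) (by norm_num) with hz7|hz7
                · -- (3, 4) = 0
                    omega
                · -- (4, 1) = 0
                    omega
              · -- (4, 1) = 0
                  omega
            · -- (4, 1) = 0
                omega
          · -- (4, 1) = 0
              omega
        · -- (4, 1) = 0
            omega
      · -- (4, 1) = 0
          omega
    · -- (4, 1) = 0
      rcases hcomp 1 2 2 1 (by norm_num) (by norm_num) with hz2|hz2
      · -- (1, 2) = 0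
          omega
      · -- (2, 1) = 0
          omega
  · -- (4, 1) = 0
    rcases hcomp 1 4 2 1 (by norm_num) (by norm_num) with hz1|hz1
    · -- (1, 4) = 0
      rcases hcomp 1 2 2 1 (by norm_num) (by norm_num) with hz2|hz2
      · -- (1, 2) = 0
          omega
      · -- (2, 1) = 0
          omega
    · -- (2, 1) = 0
      rcases hcomp 1 4 2 2 (by norm_num) (by norm_num) with hz2|hz2
      · -- (1, 4) = 0
          omega
      · -- (2, 2) = 0
        rcases hcomp 1 4 2 3 (by norm_num) (by norm_num) with hz3|hz3
        · -- (1, 4) = 0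
            omega
        · -- (2, 3) = 0
          rcases hcomp 1 4 4 3 (by norm_num) (by norm_num) with hz4|hz4
          · -- (1, 4) = 0
              omega
          · -- (4, 3) = 0
              omega

end AlnAux
namespace AlnAux

lemma osum_le_tsum (m : ℕ → ℕ → ℕ) : osum m ≤ tsm m := by
  unfold osum tsm rsum; omega

lemma split_eq {t1 t2 D1 D2 c1 : ℝ} (ht1 : 0 < t1) (ht2 : 0 < t2) (hsum : t1 + t2 = 1)
    (d1 : D1 ≤ c1) (d2 : D2 ≤ c1) (hc : t1 * D1 + t2 * D2 = c1) : D1 = c1 ∧ D2 = c1 := by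
  have h1 : t1 * D1 ≤ t1 * c1 := mul_le_mul_of_nonneg_left d1 ht1.le
  have h2 : t2 * D2 ≤ t2 * c1 := mul_le_mul_of_nonneg_left d2 ht2.le
  have hs1 : t1 * c1 + t2 * c1 = c1 := by rw [← add_mul, hsum, one_mul]
  have e1 : t1 * D1 = t1 * c1 := by linarith
  have e2 : t2 * D2 = t2 * c1 := by linarith
  exact ⟨mul_left_cancel₀ ht1.ne' e1, mul_left_cancel₀ ht2.ne' e2⟩

lemma hull_le {S : Set (ℝ × ℝ)} (α β γ : ℝ) (h : ∀ p ∈ S, α * p.1 + β * p.2 ≤ γ) :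
    ∀ p ∈ convexHull ℝ S, α * p.1 + β * p.2 ≤ γ := by
  have hlin : IsLinearMap ℝ (fun x : ℝ × ℝ => α * x.1 + β * x.2) := by
    constructor
    · intro x y; simp [Prod.fst_add, Prod.snd_add]; ring
    · intro c x; simp [Prod.smul_fst, Prod.smul_snd, smul_eq_mul]; ring
  have hconv : Convex ℝ {x : ℝ × ℝ | α * x.1 + β * x.2 ≤ γ} := convex_halfSpace_le hlin γ
  intro p hp
  exact convexHull_min h hconv hp

end AlnAux

set_option maxHeartbeats 2000000

open AlnAux

/-- For `0 < u < v`, `a = 2v`, `b = v - u`, `n = 2a + 2b = 6v - 2u`, and the binary strings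
`σ¹ = 0^a 1^b 0^b 1^a`, `σ² = 1^a 0^b 1^b 0^a`, the convex hull of the points
`(y', z) = (insertions, matches)` over all alignments of `σ¹` and `σ²` has `(b, 3b)` and
`(a+b, a+b)` as vertices, the segment between them is an edge of the hull, and its slope is
`(a - 2b)/a = u/v`. -/
theorem alignment_polygon_slope (u v a b : ℕ) (hu : 0 < u) (huv : u < v)
    (hab : a = 2 * v) (hbb : b = v - u)
    (σ1 σ2 : List Bool)
    (hσ1 : σ1 = List.replicate a false ++ List.replicate b true ++
            List.replicate b false ++ List.replicate a true)
    (hσ2 : σ2 = List.replicate a true ++ List.replicate b false ++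
            List.replicate b true ++ List.replicate a false)
    (S : Set (ℝ × ℝ))
    (hS : S = {p | ∃ A, IsAlignment σ1 σ2 A ∧
            p = ((nSpaces A : ℝ) / 2, (nMatches A : ℝ))}) :
    ((b : ℝ), 3 * (b : ℝ)) ∈ Set.extremePoints ℝ (convexHull ℝ S) ∧
    ((a : ℝ) + b, (a : ℝ) + b) ∈ Set.extremePoints ℝ (convexHull ℝ S) ∧
    (∃ w : ℝ × ℝ, face2 w (convexHull ℝ S) =
        segment ℝ ((b : ℝ), 3 * (b : ℝ)) ((a : ℝ) + b, (a : ℝ) + b)) ∧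
    (((a : ℝ) + b) - 3 * b) / (((a : ℝ) + b) - b) = ((a : ℝ) - 2 * b) / a ∧
    ((a : ℝ) - 2 * b) / a = (u : ℝ) / v := by
  have hb1 : 1 ≤ b := by omega
  have hv : v = u + b := by omega
  have ha : a = 2 * u + 2 * b := by omega
  have haR : (a : ℝ) = 2 * u + 2 * b := by exact_mod_cast congrArg (fun n : ℕ => (n : ℝ)) ha
  have hvR : (v : ℝ) = u + b := by exact_mod_cast congrArg (fun n : ℕ => (n : ℝ)) hv
  have hu0 : (0 : ℝ) < u := by exact_mod_cast hu
  have hb0 : (0 : ℝ) < b := by exact_mod_cast hb1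
  have ha0 : (0 : ℝ) < a := by rw [haR]; linarith
  set P1 : ℝ × ℝ := ((b : ℝ), 3 * (b : ℝ)) with hP1def
  set P2 : ℝ × ℝ := ((a : ℝ) + b, (a : ℝ) + b) with hP2def
  -- bounds on S
  have hSb : ∀ p ∈ S, p.2 ≤ (a : ℝ) + b ∧ -p.1 + p.2 ≤ 2 * b ∧
      p.1 + p.2 ≤ 2 * (a : ℝ) + 2 * b ∧ -(u : ℝ) * p.1 + v * p.2 ≤ b * ((a : ℝ) + b) := by
    rw [hS]
    rintro p ⟨A, ⟨hnm, hf, hs⟩, rfl⟩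
    have h1 : A.filterMap Prod.fst = XX a b b a := by rw [hf, hσ1]; rfl
    have h2 : A.filterMap Prod.snd = YY a b b a := by rw [hs, hσ2]; rfl
    obtain ⟨m, hl, hch, hr1, hr2, hr3, hr4, hc1, hc2, hc3, hc4, hm, hsp⟩ :=
      key A a b b a a b b a h1 h2
    simp only [rsum] at hr1 hr2 hr3 hr4
    simp only [csum] at hc1 hc2 hc3 hc4
    have H3 := static_H3 b u m (by omega) (by omega) (by omega) (by omega)
      (by omega) (by omega) (by omega) (by omega) hch
    have Hlin := static_lin b u m (by omega) (by omega) (by omega) (by omega)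
      (by omega) (by omega) (by omega) (by omega) hch
    have e1 : osum m = m 1 2 + m 1 4 + m 2 1 + m 2 3 + m 3 2 + m 3 4 + m 4 1 + m 4 3 := rfl
    have e2 : tsm m = m 1 1 + m 1 2 + m 1 3 + m 1 4 + m 2 1 + m 2 2 + m 2 3 + m 2 4
        + m 3 1 + m 3 2 + m 3 3 + m 3 4 + m 4 1 + m 4 2 + m 4 3 + m 4 4 := by
      unfold tsm rsum; omega
    have hm' : nMatches A = m 1 2 + m 1 4 + m 2 1 + m 2 3 + m 3 2 + m 3 4 + m 4 1 + m 4 3 := by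
      rw [hm, e1]
    -- natural number facts
    have f1 : nMatches A ≤ 3 * b + 2 * u := by rw [hm']; omega
    have f2 : nMatches A + tsm m ≤ 8 * b + 4 * u := by rw [hm', e2]; omega
    have f3 : (b + u) * nMatches A + u * tsm m ≤ (b + 2 * u) * (3 * b + 2 * u) := by
      rw [hm', e2]; exact H3
    have f4 : nMatches A ≤ tsm m := by rw [hm', e2]; omega
    have f5 : nSpaces A + 2 * tsm m = 8 * u + 12 * b := by omega
    -- real versions
    have r1 : (nMatches A : ℝ) ≤ 3 * b + 2 * u := by exact_mod_cast f1
    have r2 : (nMatches A : ℝ) + tsm m ≤ 8 * b + 4 * u := by exact_mod_cast f2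
    have r3 : ((b : ℝ) + u) * nMatches A + u * tsm m ≤ ((b : ℝ) + 2 * u) * (3 * b + 2 * u) := by
      exact_mod_cast f3
    have r4 : (nMatches A : ℝ) ≤ tsm m := by exact_mod_cast f4
    have r5 : (nSpaces A : ℝ) + 2 * tsm m = 8 * u + 12 * b := by exact_mod_cast f5
    refine ⟨by rw [haR]; linarith, by linarith, by rw [haR]; linarith, ?_⟩
    rw [haR, hvR]
    nlinarith [r3, r5]
  -- membership of the two vertices
  have hP1S : P1 ∈ S := by
    rw [hS]
    refine ⟨Al1 u b, ⟨Al1_nomem u b, ?_, ?_⟩, ?_⟩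
    · rw [hσ1]
      have := Al1_fst u b
      rw [← ha] at this
      exact this
    · rw [hσ2]
      have := Al1_snd u b
      rw [← ha] at this
      exact this
    · rw [hP1def, Al1_nSpaces, Al1_nMatches]
      refine Prod.ext ?_ ?_ <;> push_cast <;> ring
  have hP2S : P2 ∈ S := by
    rw [hS]
    refine ⟨Al2 u b, ⟨Al2_nomem u b, ?_, ?_⟩, ?_⟩
    · rw [hσ1]
      have := Al2_fst u b
      rw [← ha] at this
      exact this
    · rw [hσ2]
      have := Al2_snd u b
      rw [← ha] at this
      exact this
    · rw [hP2def, Al2_nSpaces, Al2_nMatches]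
      refine Prod.ext ?_ ?_ <;> push_cast <;> rw [haR] <;> ring
  have hP1 : P1 ∈ convexHull ℝ S := subset_convexHull ℝ S hP1S
  have hP2 : P2 ∈ convexHull ℝ S := subset_convexHull ℝ S hP2S
  -- hull-wide bounds
  have B1 := hull_le (S := S) 0 1 ((a : ℝ) + b) (fun p hp => by
    have := (hSb p hp).1; linarith)
  have B2 := hull_le (S := S) (-1) 1 (2 * (b : ℝ)) (fun p hp => by
    have := (hSb p hp).2.1; linarith)
  have B3 := hull_le (S := S) 1 1 (2 * (a : ℝ) + 2 * b) (fun p hp => by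
    have := (hSb p hp).2.2.1; linarith)
  have B4 := hull_le (S := S) (-(u : ℝ)) v ((b : ℝ) * ((a : ℝ) + b)) (fun p hp => by
    have := (hSb p hp).2.2.2; linarith)
  set w : ℝ × ℝ := (-(u : ℝ), (v : ℝ)) with hwdef
  have hdot : ∀ x : ℝ × ℝ, dot2 w x = -(u : ℝ) * x.1 + v * x.2 := by
    intro x; rw [hwdef]; rfl
  have hdotP1 : dot2 w P1 = (b : ℝ) * ((a : ℝ) + b) := by
    rw [hdot, hP1def]; rw [hvR, haR]; ring
  have hdotP2 : dot2 w P2 = (b : ℝ) * ((a : ℝ) + b) := by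
    rw [hdot, hP2def]; rw [hvR, haR]; ring
  -- any maximizer lies on the segment
  have hface_sub : ∀ x ∈ convexHull ℝ S, dot2 w x = (b : ℝ) * ((a : ℝ) + b) →
      x ∈ segment ℝ P1 P2 := by
    intro x hx heq0
    have heq : -(u : ℝ) * x.1 + v * x.2 = b * ((a : ℝ) + b) := by rw [← hdot x]; exact heq0
    have h1 : x.2 ≤ (a : ℝ) + b := by have := B1 x hx; linarith
    have h2 : -x.1 + x.2 ≤ 2 * (b : ℝ) := by have := B2 x hx; linarith
    have hxlo : (b : ℝ) ≤ x.1 := by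
      have hbx : (b : ℝ) * b ≤ b * x.1 := by nlinarith [heq, h2]
      exact (mul_le_mul_iff_right₀ hb0).mp hbx
    have hxhi : x.1 ≤ (a : ℝ) + b := by
      have hux : (u : ℝ) * x.1 ≤ u * ((a : ℝ) + b) := by nlinarith [heq, h1]
      exact (mul_le_mul_iff_right₀ hu0).mp hux
    refine ⟨((a : ℝ) + b - x.1) / a, (x.1 - b) / a, ?_, ?_, ?_, ?_⟩
    · exact div_nonneg (by linarith) ha0.le
    · exact div_nonneg (by linarith) ha0.le
    · field_simp
      ring
    · refine Prod.ext ?_ ?_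
      · show ((a : ℝ) + b - x.1) / a * b + (x.1 - b) / a * ((a : ℝ) + b) = x.1
        field_simp
        ring
      · show ((a : ℝ) + b - x.1) / a * (3 * b) + (x.1 - b) / a * ((a : ℝ) + b) = x.2
        rw [div_mul_eq_mul_div, div_mul_eq_mul_div, ← add_div, div_eq_iff ha0.ne']
        rw [haR] at heq ⊢
        rw [hvR] at heq
        nlinarith [heq]
  have hface : face2 w (convexHull ℝ S) = segment ℝ P1 P2 := by
    ext x
    constructor
    · rintro ⟨hx, hmax⟩
      have h4 : dot2 w x ≤ (b : ℝ) * ((a : ℝ) + b) := by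
        have := B4 x hx; rw [hdot]; linarith
      have hge : (b : ℝ) * ((a : ℝ) + b) ≤ dot2 w x := by
        have := hmax P1 hP1; rw [hdotP1] at this; exact this
      exact hface_sub x hx (le_antisymm h4 hge)
    · rintro ⟨t1, t2, ht1, ht2, hsum, rfl⟩
      refine ⟨(convex_convexHull ℝ S) hP1 hP2 ht1 ht2 hsum, ?_⟩
      intro y hy
      have hub := B4 y hy
      have hcv : dot2 w (t1 • P1 + t2 • P2) = (b : ℝ) * ((a : ℝ) + b) := by
        have h2' : t2 = 1 - t1 := by linarith
        rw [hdot]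
        simp only [Prod.fst_add, Prod.snd_add, Prod.smul_fst, Prod.smul_snd, smul_eq_mul,
          hP1def, hP2def]
        rw [h2', hvR, haR]; ring
      rw [hcv, hdot]; linarith
  -- extreme points
  have hsolve1 : ∀ x : ℝ × ℝ, -(u : ℝ) * x.1 + v * x.2 = b * ((a : ℝ) + b) →
      -x.1 + x.2 = 2 * (b : ℝ) → x = P1 := by
    intro x e1 e2
    have ex2 : x.2 = x.1 + 2 * b := by linarith
    rw [ex2, hvR, haR] at e1
    have e3 : (b : ℝ) * x.1 = b * b := by nlinarith [e1]
    have e4 : x.1 = b := by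
      have := (mul_right_inj' hb0.ne').mp e3; exact this
    refine Prod.ext ?_ ?_
    · rw [hP1def]; exact e4
    · rw [hP1def]; show x.2 = 3 * (b : ℝ); rw [ex2, e4]; ring
  have hsolve2 : ∀ x : ℝ × ℝ, -(u : ℝ) * x.1 + v * x.2 = b * ((a : ℝ) + b) →
      x.1 + x.2 = 2 * (a : ℝ) + 2 * b → x = P2 := by
    intro x e1 e2
    have ex2 : x.2 = 2 * (a : ℝ) + 2 * b - x.1 := by linarith
    rw [ex2, hvR, haR] at e1
    have e3 : ((u : ℝ) + (u + b)) * x.1 = (u + (u + b)) * ((2 * (u : ℝ) + 2 * b) + b) := by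
      nlinarith [e1]
    have e4 : x.1 = (2 * (u : ℝ) + 2 * b) + b := by
      have hpos : (0 : ℝ) < (u : ℝ) + (u + b) := by linarith
      exact (mul_right_inj' hpos.ne').mp e3
    refine Prod.ext ?_ ?_
    · rw [hP2def]; show x.1 = (a : ℝ) + b; rw [e4, haR]
    · rw [hP2def]; show x.2 = (a : ℝ) + b; rw [ex2, e4, haR]; ring
  have hextr : ∀ (P : ℝ × ℝ) (ℓa ℓb ℓc : ℝ),
      P ∈ convexHull ℝ S →
      (∀ y ∈ convexHull ℝ S, ℓa * y.1 + ℓb * y.2 ≤ ℓc) →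
      ℓa * P.1 + ℓb * P.2 = ℓc →
      dot2 w P = (b : ℝ) * ((a : ℝ) + b) →
      (∀ x : ℝ × ℝ, -(u : ℝ) * x.1 + v * x.2 = b * ((a : ℝ) + b) →
        ℓa * x.1 + ℓb * x.2 = ℓc → x = P) →
      P ∈ Set.extremePoints ℝ (convexHull ℝ S) := by
    intro P la lb lc hPm hlle hPeq hPdot hsol
    refine ⟨hPm, fun x1 hx1 x2 hx2 hop => ?_⟩
    obtain ⟨t1, t2, ht1, ht2, hsum, hcombo⟩ := hop
    have d1 := B4 x1 hx1
    have d2 := B4 x2 hx2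
    have l1 := hlle x1 hx1
    have l2 := hlle x2 hx2
    have hdcombo : t1 * (-(u : ℝ) * x1.1 + v * x1.2) + t2 * (-(u : ℝ) * x2.1 + v * x2.2)
        = (b : ℝ) * ((a : ℝ) + b) := by
      have : dot2 w (t1 • x1 + t2 • x2) = (b : ℝ) * ((a : ℝ) + b) := by
        rw [hcombo]; exact hPdot
      rw [hdot] at this
      simp only [Prod.fst_add, Prod.snd_add, Prod.smul_fst, Prod.smul_snd, smul_eq_mul] at this
      linarith [this]
    have hlcombo : t1 * (la * x1.1 + lb * x1.2) + t2 * (la * x2.1 + lb * x2.2) = lc := by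
      have : la * (t1 • x1 + t2 • x2).1 + lb * (t1 • x1 + t2 • x2).2 = lc := by
        rw [hcombo]; exact hPeq
      simp only [Prod.fst_add, Prod.snd_add, Prod.smul_fst, Prod.smul_snd, smul_eq_mul] at this
      linarith [this]
    obtain ⟨hd1, hd2⟩ := split_eq ht1 ht2 hsum d1 d2 hdcombo
    obtain ⟨hl1, hl2⟩ := split_eq ht1 ht2 hsum l1 l2 hlcombo
    exact hsol x1 hd1 hl1
  refine ⟨?_, ?_, ⟨w, hface⟩, ?_, ?_⟩
  · -- P1 extreme
    refine hextr P1 (-1) 1 (2 * (b : ℝ)) hP1 (fun y hy => by have := B2 y hy; linarith) ?_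
      hdotP1 ?_
    · rw [hP1def]; ring
    · intro x h1 h2
      exact hsolve1 x h1 (by linarith)
  · -- P2 extreme
    refine hextr P2 1 1 (2 * (a : ℝ) + 2 * b) hP2 (fun y hy => by have := B3 y hy; linarith) ?_
      hdotP2 ?_
    · rw [hP2def]; ring
    · intro x h1 h2
      exact hsolve2 x h1 (by linarith)
  · rw [show ((a : ℝ) + b) - 3 * b = (a : ℝ) - 2 * b by ring,
      show ((a : ℝ) + b) - b = (a : ℝ) by ring]
  · have hbR : (b : ℝ) = (v : ℝ) - u := by
      rw [hbb, Nat.cast_sub huv.le]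
    have hv0 : (0 : ℝ) < v := by rw [hvR]; linarith
    rw [hbR, haR, hvR]
    field_simp
    ring
end
end
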